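/- arXiv:1010.4515 — 8 statements merged into one kernel-verified Lean document; each statement's English description precedes it below -/
import Mathlib

section
/- Let (𝒳, 𝒮) be a measurable space. If 𝒞 ⊆ 𝒮 has finite VC dimension, then 𝒞 is finitely approximable with respect to every probability measure μ on (𝒳, 𝒮). -/
/-!
Write `β(E) = boundaryDefect μ 𝒞 E` for the infimum, over finite measurable partitions `P` of
`E`, of `sup_{C ∈ 𝒞} μ(∂(C : P))`; finite approximability says `β(univ) = 0`. Since `β` is
subadditive on disjoint sets and `β(E) ≤ μ(E)`, an exhaustion argument reduces this to: for every
`δ > 0`, every set `W` of positive measure contains a set `Q` of positive measure with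
`β(Q) ≤ δ μ(Q)`.

If `W` has no such subset, every positive subset of `W` is split by some `C ∈ 𝒞`, so `μ` has
no atoms inside `W`. Let `k` bound the VC dimension and take `n` disjoint positive pieces of `W`.
Either `k + 1` of them, suitably shrunk, are *hereditarily split* (every positive shrinking of
them is split by a single `C ∈ 𝒞`); refining them along all `2^(k+1)` patterns then produces a
shattered set of `k + 1` points. Or the pieces can be shrunk so that every `C ∈ 𝒞` splits at
most `k` of them; cutting them down to comparable measures `c/2 ≤ μ ≤ c`, their union `E`
satisfies `δ n c / 2 ≤ δ μ(E) < β(E) ≤ k c`, which is absurd once `n δ > 2 (k + 1)`.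
-/

open MeasureTheory Set Filter

/-- `𝒞` shatters the finite set `D` if every subset of `D` is cut out by some `C ∈ 𝒞`. -/
def Shatters {X : Type*} (𝒞 : Set (Set X)) (D : Finset X) : Prop :=
  ∀ B ⊆ D, ∃ C ∈ 𝒞, ∀ x ∈ D, x ∈ C ↔ x ∈ B

/-- `𝒞` has finite VC dimension: the cardinalities of shattered finite sets are bounded. -/
def FiniteVC {X : Type*} (𝒞 : Set (Set X)) : Prop :=
  ∃ k : ℕ, ∀ D : Finset X, Shatters 𝒞 D → D.card ≤ k

/-- `π` is a finite measurable partition of the whole space. -/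
def IsFinitePartition {X : Type*} [MeasurableSpace X] (π : Set (Set X)) : Prop :=
  π.Finite ∧ (∀ A ∈ π, MeasurableSet A) ∧
    (∀ A ∈ π, ∀ B ∈ π, A ≠ B → Disjoint A B) ∧ ⋃₀ π = Set.univ

/-- The `π`-boundary of `C`: union of the cells of `π` meeting both `C` and `Cᶜ`
with positive measure. -/
def piBoundary {X : Type*} [MeasurableSpace X] (μ : Measure X) (π : Set (Set X))
    (C : Set X) : Set X :=
  ⋃₀ {A ∈ π | 0 < μ (A ∩ C) * μ (A ∩ Cᶜ)}

/-- `𝒞` is finitely approximable w.r.t. `μ`: for every `ε > 0` there is a finite measurable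
partition `π` such that `μ (∂(C : π)) ≤ ε` for every `C ∈ 𝒞`. -/
def FinitelyApproximable {X : Type*} [MeasurableSpace X] (μ : Measure X)
    (𝒞 : Set (Set X)) : Prop :=
  ∀ ε : ENNReal, 0 < ε → ∃ π : Set (Set X), IsFinitePartition π ∧
    ∀ C ∈ 𝒞, μ (piBoundary μ π C) ≤ ε

open scoped ENNReal Finset Function Topology

section

theorem exists_lt_le_add_of_le_add {α : Type*} [LinearOrder α] [Add α] [AddRightMono α]
    {u : ℕ → α} {a d : α} (h₀ : u 0 ≤ a + d) (hstep : ∀ n, u (n + 1) ≤ u n + d)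
    (h : ∃ n, a < u n) : ∃ n, a < u n ∧ u n ≤ a + d := by
  classical
  refine ⟨Nat.find h, Nat.find_spec h, ?_⟩
  rcases hN : Nat.find h with _ | n
  · exact h₀
  · have : u n ≤ a := not_lt.1 (Nat.find_min h (by omega))
    exact (hstep n).trans (add_le_add_left this d)

theorem exists_maximal_pairwiseDisjoint {α : Type*} (p : Set α → Prop) :
    ∃ F : Set (Set α), (∀ A ∈ F, p A) ∧ F.PairwiseDisjoint id ∧
      ∀ A, p A → (∀ B ∈ F, Disjoint A B) → A ∈ F := by
  obtain ⟨F, ⟨hFp, hFd⟩, hFmax⟩ :=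
    zorn_subset {F : Set (Set α) | (∀ A ∈ F, p A) ∧ F.PairwiseDisjoint id} fun c hc hchain =>
      ⟨⋃₀ c, ⟨fun A ⟨F, hF, hA⟩ => (hc hF).1 A hA,
        (pairwiseDisjoint_sUnion hchain.directedOn).2 fun F hF => (hc hF).2⟩,
        fun _ => subset_sUnion_of_mem⟩
  refine ⟨F, hFp, hFd, fun A hA hAF => hFmax ⟨?_, ?_⟩ (subset_insert A F) (mem_insert A F)⟩
  · rintro B (rfl | hB)
    exacts [hA, hFp B hB]
  · exact hFd.insert fun B hB _ => hAF B hB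

theorem Finset.card_filter_lt_of_forall_mem_powersetCard {ι : Type*} {t : Finset ι}
    {p : ι → Prop} [DecidablePred p] {m : ℕ} (h : ∀ s ∈ t.powersetCard m, ∃ i ∈ s, ¬ p i) :
    #{i ∈ t | p i} < m := by
  by_contra! hm
  obtain ⟨s, hs, hcard⟩ := Finset.exists_subset_card_eq hm
  obtain ⟨i, hi, hpi⟩ :=
    h s (Finset.mem_powersetCard.2 ⟨hs.trans (Finset.filter_subset _ _), hcard⟩)
  exact hpi (Finset.mem_filter.1 (hs hi)).2

variable {X : Type*} [MeasurableSpace X] {μ : Measure X}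

theorem Set.PairwiseDisjoint.countable_of_measure_pos [SFinite μ] {F : Set (Set X)}
    (hd : F.PairwiseDisjoint id) (hm : ∀ A ∈ F, MeasurableSet A) (hpos : ∀ A ∈ F, 0 < μ A) :
    F.Countable := by
  have := Measure.countable_meas_pos_of_disjoint_iUnion (μ := μ)
    (As := fun A : F => (A : Set X)) (fun A => hm A A.2)
    fun A B hAB => hd A.2 B.2 (Subtype.coe_ne_coe.2 hAB)
  rw [show {A : F | 0 < μ A} = univ from eq_univ_of_forall fun A => hpos A A.2,
    countable_univ_iff] at this
  exact countable_coe_iff.1 this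

theorem exists_pairwiseDisjoint_measure_diff_sUnion_eq_zero [SFinite μ] {p : Set X → Prop}
    {R : Set X} (hR : MeasurableSet R)
    (hp : ∀ E ⊆ R, MeasurableSet E → 0 < μ E → ∃ A ⊆ E, MeasurableSet A ∧ 0 < μ A ∧ p A) :
    ∃ F : Set (Set X), F.Countable ∧ F.PairwiseDisjoint id ∧
      (∀ A ∈ F, A ⊆ R ∧ MeasurableSet A ∧ p A) ∧ μ (R \ ⋃₀ F) = 0 := by
  obtain ⟨F, hFp, hFd, hFmax⟩ :=
    exists_maximal_pairwiseDisjoint fun A => A ⊆ R ∧ MeasurableSet A ∧ 0 < μ A ∧ p A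
  have hFc : F.Countable :=
    hFd.countable_of_measure_pos (fun A hA => (hFp A hA).2.1) fun A hA => (hFp A hA).2.2.1
  refine ⟨F, hFc, hFd, fun A hA => ⟨(hFp A hA).1, (hFp A hA).2.1, (hFp A hA).2.2.2⟩, ?_⟩
  by_contra hne
  obtain ⟨A, hAR, hAm, hApos, hpA⟩ := hp _ sdiff_subset
    (hR.diff (.sUnion hFc fun A hA => (hFp A hA).2.1)) (pos_iff_ne_zero.2 hne)
  have hAF : A ∈ F := hFmax A ⟨hAR.trans sdiff_subset, hAm, hApos, hpA⟩ fun B hB =>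
    (disjoint_sdiff_left.mono_right (subset_sUnion_of_mem hB)).mono_left hAR
  have hA : A = ∅ := subset_empty_iff.1 fun x hx => (hAR hx).2 (subset_sUnion_of_mem hAF hx)
  simp [hA] at hApos

theorem Set.Countable.exists_finset_measure_sUnion_diff_lt [IsFiniteMeasure μ]
    {F : Set (Set X)} (hF : F.Countable) (hm : ∀ A ∈ F, MeasurableSet A) {γ : ℝ≥0∞}
    (hγ : 0 < γ) : ∃ t : Finset (Set X), ↑t ⊆ F ∧ μ (⋃₀ F \ ⋃₀ ↑t) < γ := by
  classical
  rcases F.eq_empty_or_nonempty with rfl | hne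
  · exact ⟨∅, by simp, by simpa using hγ⟩
  obtain ⟨f, rfl⟩ := hF.exists_eq_range hne
  have hfm : ∀ j, MeasurableSet (f j) := fun j => hm _ (mem_range_self j)
  have htail : Tendsto (fun N => μ (⋃₀ range f \ accumulate f N)) atTop (𝓝 0) := by
    have := tendsto_measure_iInter_atTop (μ := μ) (s := fun N => ⋃₀ range f \ accumulate f N)
      (fun N => ((MeasurableSet.iUnion hfm).diff
        (.biUnion (to_countable _) fun j _ => hfm j)).nullMeasurableSet)
      (fun i j hij => sdiff_subset_sdiff_right (monotone_accumulate hij))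
      ⟨0, measure_ne_top μ _⟩
    rwa [← sdiff_iUnion, iUnion_accumulate, sUnion_range, sdiff_self, measure_empty] at this
  obtain ⟨N, hN⟩ := (htail.eventually (gt_mem_nhds hγ)).exists
  refine ⟨(Finset.range (N + 1)).image f, by simp, ?_⟩
  convert hN using 3
  ext x
  simp [accumulate]

def IsAtomlessOn (μ : Measure X) (W : Set X) : Prop :=
  ∀ E ⊆ W, MeasurableSet E → 0 < μ E → ∃ A ⊆ E, MeasurableSet A ∧ 0 < μ A ∧ 0 < μ (E \ A)

namespace IsAtomlessOn

variable {W E : Set X}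

theorem exists_two_mul_le (h : IsAtomlessOn μ W) (hEW : E ⊆ W) (hE : MeasurableSet E)
    (hpos : 0 < μ E) : ∃ A ⊆ E, MeasurableSet A ∧ 0 < μ A ∧ 2 * μ A ≤ μ E := by
  obtain ⟨A, hAE, hA, hApos, hdiff⟩ := h E hEW hE hpos
  have hsum : μ A + μ (E \ A) = μ E := by
    rw [measure_add_sdiff hA.nullMeasurableSet, union_eq_right.2 hAE]
  rcases le_total (μ A) (μ (E \ A)) with hle | hle
  · exact ⟨A, hAE, hA, hApos, by rw [two_mul, ← hsum]; gcongr⟩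
  · exact ⟨E \ A, sdiff_subset, hE.diff hA, hdiff, by rw [two_mul, ← hsum, add_comm]; gcongr⟩

theorem exists_subset_measure_le [IsFiniteMeasure μ] (h : IsAtomlessOn μ W) (hEW : E ⊆ W)
    (hE : MeasurableSet E) (hpos : 0 < μ E) {η : ℝ≥0∞} (hη : η ≠ 0) :
    ∃ A ⊆ E, MeasurableSet A ∧ 0 < μ A ∧ μ A ≤ η := by
  have halving : ∀ n : ℕ, ∃ A ⊆ E, MeasurableSet A ∧ 0 < μ A ∧ 2 ^ n * μ A ≤ μ E := by
    intro n
    induction n with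
    | zero => exact ⟨E, subset_rfl, hE, hpos, by simp⟩
    | succ n ih =>
      obtain ⟨A, hAE, hA, hApos, hAn⟩ := ih
      obtain ⟨B, hBA, hB, hBpos, hB2⟩ := h.exists_two_mul_le (hAE.trans hEW) hA hApos
      refine ⟨B, hBA.trans hAE, hB, hBpos, ?_⟩
      calc 2 ^ (n + 1) * μ B = 2 ^ n * (2 * μ B) := by ring
        _ ≤ 2 ^ n * μ A := by gcongr
        _ ≤ μ E := hAn
  obtain ⟨n, hn⟩ := ENNReal.exists_nat_mul_gt hη (measure_ne_top μ E)
  obtain ⟨A, hAE, hA, hApos, hAn⟩ := halving n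
  refine ⟨A, hAE, hA, hApos, (lt_of_mul_lt_mul_left' (hAn.trans_lt (hn.trans_le ?_))).le⟩
  gcongr
  exact_mod_cast Nat.lt_two_pow_self.le

theorem exists_subset_measure_mem_Icc [IsFiniteMeasure μ] (h : IsAtomlessOn μ W) {R : Set X}
    (hRW : R ⊆ W) (hR : MeasurableSet R) {c : ℝ≥0∞} (hc : c ≠ 0) (hcR : c ≤ μ R) :
    ∃ A ⊆ R, MeasurableSet A ∧ μ A ∈ Icc (c / 2) c := by
  -- Exhaust `R` by pieces of measure `≤ c / 2`; their partial unions grow by at most `c / 2` at a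
  -- time and eventually exceed `c / 2`.
  obtain ⟨F, hFc, -, hF, hnull⟩ := exists_pairwiseDisjoint_measure_diff_sUnion_eq_zero hR
    (p := fun A => μ A ≤ c / 2) fun E hER hE hpos =>
      h.exists_subset_measure_le (hER.trans hRW) hE hpos (ENNReal.half_pos hc).ne'
  have hcF : c ≤ μ (⋃₀ F) := calc
    c ≤ μ R := hcR
    _ ≤ μ (R \ ⋃₀ F) + μ (⋃₀ F) := (measure_mono (subset_sdiff_union _ _)).trans
      (measure_union_le _ _)
    _ = μ (⋃₀ F) := by rw [hnull, zero_add]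
  obtain ⟨f, rfl⟩ := hFc.exists_eq_range <| nonempty_iff_ne_empty.2 fun hF => by
    simp [hF, hc] at hcF
  have hfF : ∀ j, f j ⊆ R ∧ MeasurableSet (f j) ∧ μ (f j) ≤ c / 2 :=
    fun j => hF _ (mem_range_self j)
  have hlim : ∃ N, c / 2 < μ (accumulate f N) := by
    have := tendsto_measure_iUnion_accumulate (μ := μ) (f := f)
    rw [← sUnion_range] at this
    exact (this.eventually (lt_mem_nhds ((ENNReal.half_lt_self hc
      (hcR.trans_lt (measure_lt_top μ R)).ne).trans_le hcF))).exists
  obtain ⟨N, hN, hNc⟩ := exists_lt_le_add_of_le_add (u := fun N => μ (accumulate f N))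
    (a := c / 2) (d := c / 2)
    (by simpa only [accumulate_zero_nat] using (hfF 0).2.2.trans le_self_add)
    (fun n => by
      simpa only [accumulate_succ] using
        (measure_union_le _ _).trans (add_le_add_right (hfF (n + 1)).2.2 _)) hlim
  refine ⟨accumulate f N, iUnion₂_subset fun j _ => (hfF j).1,
    .biUnion (to_countable _) fun j _ => (hfF j).2.1, hN.le, ?_⟩
  rwa [ENNReal.add_halves] at hNc

theorem exists_seq_pairwise_disjoint (h : IsAtomlessOn μ W) (hW : MeasurableSet W)
    (hpos : 0 < μ W) : ∃ R : ℕ → Set X,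
      (∀ j, R j ⊆ W ∧ MeasurableSet (R j) ∧ 0 < μ (R j)) ∧ Pairwise (Disjoint on R) := by
  choose! g hgE hg hgpos hgdiff using h
  set S : ℕ → Set X := fun j => g^[j] W
  have hsucc : ∀ j, S (j + 1) = g (S j) := fun j => Function.iterate_succ_apply' g j W
  have hS : ∀ j, S j ⊆ W ∧ MeasurableSet (S j) ∧ 0 < μ (S j) := by
    intro j
    induction j with
    | zero => exact ⟨subset_rfl, hW, hpos⟩
    | succ j ih =>
      rw [hsucc]
      exact ⟨(hgE _ ih.1 ih.2.1 ih.2.2).trans ih.1, hg _ ih.1 ih.2.1 ih.2.2,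
        hgpos _ ih.1 ih.2.1 ih.2.2⟩
  have hanti : Antitone S := antitone_nat_of_succ_le fun j => by
    rw [hsucc]; exact hgE _ (hS j).1 (hS j).2.1 (hS j).2.2
  refine ⟨fun j => S j \ S (j + 1), fun j => ⟨sdiff_subset.trans (hS j).1,
    (hS j).2.1.diff (hS (j + 1)).2.1, show 0 < μ (S j \ S (j + 1)) by
      rw [hsucc]; exact hgdiff _ (hS j).1 (hS j).2.1 (hS j).2.2⟩,
    fun i j hij => ?_⟩
  wlog hlt : i < j generalizing i j
  · exact (this j i hij.symm (by omega)).symm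
  exact disjoint_sdiff_left.mono_right (sdiff_subset.trans (hanti hlt))

end IsAtomlessOn

def Splits (μ : Measure X) (C A : Set X) : Prop :=
  0 < μ (A ∩ C) * μ (A ∩ Cᶜ)

theorem splits_iff {C A : Set X} : Splits μ C A ↔ 0 < μ (A ∩ C) ∧ 0 < μ (A ∩ Cᶜ) :=
  ENNReal.mul_pos_iff

theorem Splits.mono {C A B : Set X} (h : Splits μ C A) (hAB : A ⊆ B) : Splits μ C B := by
  rw [splits_iff] at h ⊢
  exact ⟨h.1.trans_le (by gcongr), h.2.trans_le (by gcongr)⟩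

/-- `IsFinitePartition π` is `IsPartitionOf π univ`. -/
def IsPartitionOf (P : Set (Set X)) (E : Set X) : Prop :=
  P.Finite ∧ (∀ A ∈ P, MeasurableSet A) ∧
    (∀ A ∈ P, ∀ B ∈ P, A ≠ B → Disjoint A B) ∧ ⋃₀ P = E

namespace IsPartitionOf

variable {P P₁ P₂ : Set (Set X)} {E E₁ E₂ A : Set X}

theorem singleton (hE : MeasurableSet E) : IsPartitionOf {E} E :=
  ⟨finite_singleton E, by simpa using hE, by simp, sUnion_singleton E⟩

theorem subset_of_mem (h : IsPartitionOf P E) (hA : A ∈ P) : A ⊆ E :=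
  h.2.2.2 ▸ subset_sUnion_of_mem hA

theorem union (h₁ : IsPartitionOf P₁ E₁) (h₂ : IsPartitionOf P₂ E₂) (hd : Disjoint E₁ E₂) :
    IsPartitionOf (P₁ ∪ P₂) (E₁ ∪ E₂) := by
  refine ⟨h₁.1.union h₂.1, fun A hA => hA.elim (h₁.2.1 A) (h₂.2.1 A), ?_, by
    rw [sUnion_union, h₁.2.2.2, h₂.2.2.2]⟩
  rintro A (hA | hA) B (hB | hB) hAB
  · exact h₁.2.2.1 A hA B hB hAB
  · exact hd.mono (h₁.subset_of_mem hA) (h₂.subset_of_mem hB)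
  · exact (hd.mono (h₁.subset_of_mem hB) (h₂.subset_of_mem hA)).symm
  · exact h₂.2.2.1 A hA B hB hAB

end IsPartitionOf

theorem isPartitionOf_range {ι : Type*} [Finite ι] {U : ι → Set X}
    (hm : ∀ i, MeasurableSet (U i)) (hd : Pairwise (Disjoint on U)) :
    IsPartitionOf (range U) (⋃ i, U i) :=
  ⟨finite_range U, forall_mem_range.2 hm,
    by rintro _ ⟨i, rfl⟩ _ ⟨j, rfl⟩ hij; exact hd (ne_of_apply_ne U hij), sUnion_range U⟩

section Boundary

variable {P P₁ P₂ : Set (Set X)} {E : Set X} {C : Set X}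

theorem piBoundary_subset (h : IsPartitionOf P E) : piBoundary μ P C ⊆ E :=
  sUnion_subset fun _ hA => h.subset_of_mem hA.1

theorem piBoundary_union :
    piBoundary μ (P₁ ∪ P₂) C = piBoundary μ P₁ C ∪ piBoundary μ P₂ C := by
  ext x
  simp only [piBoundary, mem_sUnion, mem_union, mem_ofPred_eq]
  grind

theorem piBoundary_singleton_of_not_splits (h : ¬ Splits μ C E) : piBoundary μ {E} C = ∅ :=
  sUnion_eq_empty.2 fun _ ⟨hA, hs⟩ => (h (mem_singleton_iff.1 hA ▸ hs)).elim

theorem piBoundary_range {ι : Type*} (U : ι → Set X) :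
    piBoundary μ (range U) C = ⋃ (i) (_ : Splits μ C (U i)), U i := by
  ext x
  simp [piBoundary, Splits]

end Boundary

noncomputable def boundaryDefect (μ : Measure X) (𝒞 : Set (Set X)) (E : Set X) : ℝ≥0∞ :=
  ⨅ (P : Set (Set X)) (_ : IsPartitionOf P E), ⨆ C ∈ 𝒞, μ (piBoundary μ P C)

section BoundaryDefect

variable {𝒞 : Set (Set X)} {P : Set (Set X)} {E E₁ E₂ : Set X} {b : ℝ≥0∞}

theorem boundaryDefect_le (hP : IsPartitionOf P E) (h : ∀ C ∈ 𝒞, μ (piBoundary μ P C) ≤ b) :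
    boundaryDefect μ 𝒞 E ≤ b :=
  iInf₂_le_of_le P hP (iSup₂_le h)

theorem exists_isPartitionOf_of_boundaryDefect_lt (h : boundaryDefect μ 𝒞 E < b) :
    ∃ P, IsPartitionOf P E ∧ ∀ C ∈ 𝒞, μ (piBoundary μ P C) < b := by
  simp only [boundaryDefect, iInf_lt_iff] at h
  obtain ⟨P, hP, hlt⟩ := h
  exact ⟨P, hP, fun C hC =>
    (le_iSup₂ (f := fun C (_ : C ∈ 𝒞) => μ (piBoundary μ P C)) C hC).trans_lt hlt⟩

theorem boundaryDefect_le_measure (hE : MeasurableSet E) : boundaryDefect μ 𝒞 E ≤ μ E :=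
  boundaryDefect_le (.singleton hE) fun _ _ => measure_mono (piBoundary_subset (.singleton hE))

theorem boundaryDefect_eq_zero (hE : MeasurableSet E) (h : ∀ C ∈ 𝒞, ¬ Splits μ C E) :
    boundaryDefect μ 𝒞 E = 0 :=
  nonpos_iff_eq_zero.1 <| boundaryDefect_le (.singleton hE) fun C hC => by
    rw [piBoundary_singleton_of_not_splits (h C hC), measure_empty]

theorem boundaryDefect_union_le (hd : Disjoint E₁ E₂) :
    boundaryDefect μ 𝒞 (E₁ ∪ E₂) ≤ boundaryDefect μ 𝒞 E₁ + boundaryDefect μ 𝒞 E₂ := by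
  conv_rhs => simp only [boundaryDefect, ENNReal.iInf_add, ENNReal.add_iInf]
  refine le_iInf₂ fun P₂ h₂ => le_iInf₂ fun P₁ h₁ => boundaryDefect_le (h₁.union h₂ hd)
    fun C hC => ?_
  rw [piBoundary_union]
  exact (measure_union_le _ _).trans (add_le_add
    (le_iSup₂ (f := fun C (_ : C ∈ 𝒞) => μ (piBoundary μ P₁ C)) C hC)
    (le_iSup₂ (f := fun C (_ : C ∈ 𝒞) => μ (piBoundary μ P₂ C)) C hC))

theorem boundaryDefect_biUnion_finset_le {ι : Type*} {s : Finset ι} {A : ι → Set X}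
    (hd : (s : Set ι).PairwiseDisjoint A) :
    boundaryDefect μ 𝒞 (⋃ i ∈ s, A i) ≤ ∑ i ∈ s, boundaryDefect μ 𝒞 (A i) := by
  classical
  induction s using Finset.induction_on with
  | empty => simpa using boundaryDefect_le_measure (μ := μ) (𝒞 := 𝒞) MeasurableSet.empty
  | insert a s ha ih =>
    rw [Finset.set_biUnion_insert, Finset.sum_insert ha]
    refine (boundaryDefect_union_le ?_).trans (add_le_add_right (ih (hd.subset (by simp))) _)
    exact disjoint_iUnion₂_right.2 fun i hi =>
      hd (by simp) (by simp [hi]) (ne_of_mem_of_not_mem hi ha).symm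

theorem boundaryDefect_sUnion_le [IsFiniteMeasure μ] {F : Set (Set X)} (hF : F.Countable)
    (hd : F.PairwiseDisjoint id) (hm : ∀ A ∈ F, MeasurableSet A) {δ : ℝ≥0∞}
    (hδ : ∀ A ∈ F, boundaryDefect μ 𝒞 A ≤ δ * μ A) :
    boundaryDefect μ 𝒞 (⋃₀ F) ≤ δ * μ (⋃₀ F) := by
  refine ENNReal.le_of_forall_pos_le_add fun γ hγ _ => ?_
  obtain ⟨t, htF, ht⟩ :=
    hF.exists_finset_measure_sUnion_diff_lt (μ := μ) hm (ENNReal.coe_pos.2 hγ)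
  have htd : (t : Set (Set X)).PairwiseDisjoint id := hd.subset htF
  have ht_eq : ⋃₀ (t : Set (Set X)) = ⋃ A ∈ t, id A := by simp [sUnion_eq_biUnion]
  calc boundaryDefect μ 𝒞 (⋃₀ F)
      = boundaryDefect μ 𝒞 (⋃₀ ↑t ∪ (⋃₀ F \ ⋃₀ ↑t)) := by
        rw [union_sdiff_cancel (sUnion_mono htF)]
    _ ≤ boundaryDefect μ 𝒞 (⋃₀ ↑t) + boundaryDefect μ 𝒞 (⋃₀ F \ ⋃₀ ↑t) :=
      boundaryDefect_union_le disjoint_sdiff_right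
    _ ≤ ∑ A ∈ t, δ * μ A + γ := by
      gcongr
      · rw [ht_eq]
        exact (boundaryDefect_biUnion_finset_le htd).trans
          (Finset.sum_le_sum fun A hA => hδ A (htF hA))
      · exact (boundaryDefect_le_measure ((MeasurableSet.sUnion hF hm).diff
          (.sUnion t.countable_toSet fun A hA => hm A (htF hA)))).trans ht.le
    _ = δ * μ (⋃₀ ↑t) + γ := by
      rw [← Finset.mul_sum, ht_eq, measure_biUnion_finset htd fun A hA => hm A (htF hA)]; rfl
    _ ≤ δ * μ (⋃₀ F) + γ := by gcongr

open Classical in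
theorem boundaryDefect_iUnion_le {ι : Type*} [Fintype ι] {U : ι → Set X}
    (hm : ∀ i, MeasurableSet (U i)) (hd : Pairwise (Disjoint on U)) {c : ℝ≥0∞}
    (hc : ∀ i, μ (U i) ≤ c) {k : ℕ} (hk : ∀ C ∈ 𝒞, #{i | Splits μ C (U i)} ≤ k) :
    boundaryDefect μ 𝒞 (⋃ i, U i) ≤ k * c := by
  refine boundaryDefect_le (isPartitionOf_range hm hd) fun C hC => ?_
  calc μ (piBoundary μ (range U) C)
        = μ (⋃ i ∈ ({i | Splits μ C (U i)} : Finset ι), U i) := by rw [piBoundary_range]; simp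
    _ ≤ ∑ i ∈ {i | Splits μ C (U i)}, μ (U i) := measure_biUnion_finset_le _ _
    _ ≤ #{i | Splits μ C (U i)} * c := by
        simpa using Finset.sum_le_card_nsmul _ _ c fun i _ => hc i
    _ ≤ k * c := by gcongr; exact_mod_cast hk C hC

end BoundaryDefect

section Shrinking

variable {ι : Type*} {𝒞 : Set (Set X)} {s : Finset ι} {Q Q₁ Q₂ Q₃ : ι → Set X}

variable (μ) in
def IsShrinking (s : Finset ι) (Q' Q : ι → Set X) : Prop :=
  ∀ i ∈ s, Q' i ⊆ Q i ∧ MeasurableSet (Q' i) ∧ 0 < μ (Q' i)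

variable (μ) in
def IsHereditarilySplit (𝒞 : Set (Set X)) (s : Finset ι) (Q : ι → Set X) : Prop :=
  ∀ Q', IsShrinking μ s Q' Q → ∃ C ∈ 𝒞, ∀ i ∈ s, Splits μ C (Q' i)

theorem IsShrinking.trans (h₁ : IsShrinking μ s Q₁ Q₂) (h₂ : IsShrinking μ s Q₂ Q₃) :
    IsShrinking μ s Q₁ Q₃ :=
  fun i hi => ⟨(h₁ i hi).1.trans (h₂ i hi).1, (h₁ i hi).2⟩

theorem IsHereditarilySplit.exists_isShrinking_separating (h𝒞 : ∀ C ∈ 𝒞, MeasurableSet C)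
    (hQ : IsShrinking μ s Q Q) (h : IsHereditarilySplit μ 𝒞 s Q) (T : Finset (Finset ι)) :
    ∃ Q', IsShrinking μ s Q' Q ∧ ∀ τ ∈ T, ∃ C ∈ 𝒞, ∀ i ∈ s, ∀ x ∈ Q' i, x ∈ C ↔ i ∈ τ := by
  classical
  induction T using Finset.induction_on with
  | empty => exact ⟨Q, hQ, by simp⟩
  | insert τ T _ ih =>
    obtain ⟨Q₁, hQ₁, hsep⟩ := ih
    obtain ⟨C, hC, hCs⟩ := h Q₁ hQ₁
    refine ⟨fun i => if i ∈ τ then Q₁ i ∩ C else Q₁ i \ C, fun i hi => ?_, fun τ' hτ' => ?_⟩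
    · have hsplit := splits_iff.1 (hCs i hi)
      dsimp only
      split_ifs
      · exact ⟨inter_subset_left.trans (hQ₁ i hi).1, (hQ₁ i hi).2.1.inter (h𝒞 C hC), hsplit.1⟩
      · exact ⟨sdiff_subset.trans (hQ₁ i hi).1, (hQ₁ i hi).2.1.diff (h𝒞 C hC), hsplit.2⟩
    rcases Finset.mem_insert.1 hτ' with rfl | hτ'
    · refine ⟨C, hC, fun i _ x hx => ?_⟩
      dsimp only at hx
      split_ifs at hx with hi <;> simp [hi, hx.2]
    · obtain ⟨C', hC', hC's⟩ := hsep τ' hτ'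
      refine ⟨C', hC', fun i hi x hx => hC's i hi x ?_⟩
      dsimp only at hx
      split_ifs at hx <;> exact hx.1

theorem IsHereditarilySplit.exists_shatters (h𝒞 : ∀ C ∈ 𝒞, MeasurableSet C)
    (hQ : IsShrinking μ s Q Q) (hd : (s : Set ι).PairwiseDisjoint Q)
    (h : IsHereditarilySplit μ 𝒞 s Q) : ∃ D : Finset X, D.card = s.card ∧ Shatters 𝒞 D := by
  classical
  obtain ⟨Q', hQ', hsep⟩ := h.exists_isShrinking_separating h𝒞 hQ s.powerset
  choose x hx using fun i : s => nonempty_of_measure_ne_zero (hQ' i i.2).2.2.ne'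
  have hxQ : ∀ i : s, x i ∈ Q i := fun i => (hQ' i i.2).1 (hx i)
  have hinj : Function.Injective x := fun i j hij =>
    Subtype.ext (hd.elim i.2 j.2 (not_disjoint_iff.2 ⟨x i, hxQ i, hij ▸ hxQ j⟩))
  refine ⟨Finset.univ.image x, by simp [Finset.card_image_of_injective _ hinj], fun B _ => ?_⟩
  obtain ⟨C, hC, hCs⟩ := hsep {i ∈ s | ∃ hi : i ∈ s, x ⟨i, hi⟩ ∈ B}
    (Finset.mem_powerset.2 (Finset.filter_subset _ _))
  refine ⟨C, hC, Finset.forall_mem_image.2 fun i _ => ?_⟩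
  simp [hCs i i.2 (x i) (hx i)]

theorem exists_isShrinking_forall_not_splits [Fintype ι] {T : ι → Set X}
    (hT : IsShrinking μ .univ T T) {S : Finset (Finset ι)}
    (h : ∀ T', IsShrinking μ .univ T' T → ∀ s ∈ S, ¬ IsHereditarilySplit μ 𝒞 s T') :
    ∃ T', IsShrinking μ .univ T' T ∧ ∀ s ∈ S, ∀ C ∈ 𝒞, ∃ i ∈ s, ¬ Splits μ C (T' i) := by
  classical
  induction S using Finset.induction_on with
  | empty => exact ⟨T, hT, by simp⟩
  | insert s S _ ih =>
    obtain ⟨T₁, hT₁, hdead⟩ :=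
      ih fun T' hT' s' hs' => h T' hT' s' (Finset.mem_insert_of_mem hs')
    obtain ⟨Q', hQ', hQ'dead⟩ : ∃ Q', IsShrinking μ s Q' T₁ ∧
        ∀ C ∈ 𝒞, ∃ i ∈ s, ¬ Splits μ C (Q' i) := by
      simpa [IsHereditarilySplit] using h T₁ hT₁ s (Finset.mem_insert_self s S)
    have hT₂ : IsShrinking μ .univ (s.piecewise Q' T₁) T₁ := fun i _ => by
      by_cases hi : i ∈ s
      · rw [s.piecewise_eq_of_mem _ _ hi]; exact hQ' i hi
      · rw [s.piecewise_eq_of_notMem _ _ hi]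
        exact ⟨subset_rfl, (hT₁ i (Finset.mem_univ i)).2⟩
    refine ⟨s.piecewise Q' T₁, hT₂.trans hT₁, fun s' hs' C hC => ?_⟩
    rcases Finset.mem_insert.1 hs' with rfl | hs'
    · obtain ⟨i, hi, hns⟩ := hQ'dead C hC
      exact ⟨i, hi, by rwa [s'.piecewise_eq_of_mem _ _ hi]⟩
    · obtain ⟨i, hi, hns⟩ := hdead s' hs' C hC
      exact ⟨i, hi, fun hsp => hns (hsp.mono (hT₂ i (Finset.mem_univ i)).1)⟩

end Shrinking

section Dense

variable {𝒞 : Set (Set X)} {W : Set X} {δ : ℝ≥0∞}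

theorem isAtomlessOn_of_lt_boundaryDefect (h𝒞 : ∀ C ∈ 𝒞, MeasurableSet C)
    (hdense : ∀ Q ⊆ W, MeasurableSet Q → 0 < μ Q → δ * μ Q < boundaryDefect μ 𝒞 Q) :
    IsAtomlessOn μ W := by
  intro E hEW hE hpos
  obtain ⟨C, hC, hCE⟩ : ∃ C ∈ 𝒞, Splits μ C E := by
    by_contra! h
    simpa [boundaryDefect_eq_zero hE h] using hdense E hEW hE hpos
  rw [splits_iff] at hCE
  refine ⟨E ∩ C, inter_subset_left, hE.inter (h𝒞 C hC), hCE.1, ?_⟩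
  rw [sdiff_self_inter]
  exact hCE.2

open Classical in
theorem card_mul_le_of_card_splits_le [IsFiniteMeasure μ] {ι : Type*} [Fintype ι]
    (hW : IsAtomlessOn μ W)
    (hdense : ∀ Q ⊆ W, MeasurableSet Q → 0 < μ Q → δ * μ Q < boundaryDefect μ 𝒞 Q)
    {T : ι → Set X} (hT : ∀ i, T i ⊆ W ∧ MeasurableSet (T i) ∧ 0 < μ (T i))
    (hd : Pairwise (Disjoint on T)) {k : ℕ} (hk : ∀ C ∈ 𝒞, #{i | Splits μ C (T i)} ≤ k) :
    Fintype.card ι * δ ≤ 2 * k := by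
  rcases isEmpty_or_nonempty ι with hι | hι
  · simp
  obtain i₀ : ι := Classical.arbitrary ι
  set c := Finset.univ.inf' Finset.univ_nonempty fun i => μ (T i)
  have hcT : ∀ i, c ≤ μ (T i) := fun i => Finset.inf'_le _ (Finset.mem_univ i)
  have hc : c ≠ 0 := by
    obtain ⟨i, -, hi⟩ := Finset.exists_mem_eq_inf' Finset.univ_nonempty fun i => μ (T i)
    exact (show c = μ (T i) from hi) ▸ (hT i).2.2.ne'
  have hc2 : c / 2 ≠ ∞ :=
    ENNReal.div_ne_top ((hcT i₀).trans_lt (measure_lt_top μ _)).ne two_ne_zero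
  choose U hUT hU hUc using fun i =>
    hW.exists_subset_measure_mem_Icc (hT i).1 (hT i).2.1 hc (hcT i)
  have hUd : Pairwise (Disjoint on U) := fun i j hij => (hd hij).mono (hUT i) (hUT j)
  have hupper : boundaryDefect μ 𝒞 (⋃ i, U i) ≤ k * c :=
    boundaryDefect_iUnion_le hU hUd (fun i => (hUc i).2) fun C hC => (Finset.card_le_card
      (Finset.monotone_filter_right _ fun i _ hi => hi.mono (hUT i))).trans (hk C hC)
  have hlower : Fintype.card ι * (c / 2) ≤ μ (⋃ i, U i) := by
    rw [measure_iUnion hUd hU, tsum_fintype]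
    have := Finset.card_nsmul_le_sum Finset.univ (fun i => μ (U i)) _ fun i _ => (hUc i).1
    rwa [nsmul_eq_mul, Finset.card_univ] at this
  have hpos : 0 < μ (⋃ i, U i) := (ENNReal.half_pos hc).trans_le
    ((hUc i₀).1.trans (measure_mono (subset_iUnion U i₀)))
  have hUW : ⋃ i, U i ⊆ W := iUnion_subset fun i => (hUT i).trans (hT i).1
  refine ((ENNReal.mul_lt_mul_iff_left (ENNReal.half_pos hc).ne' hc2).1 ?_).le
  calc Fintype.card ι * δ * (c / 2) = δ * (Fintype.card ι * (c / 2)) := by ring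
    _ ≤ δ * μ (⋃ i, U i) := by gcongr
    _ < boundaryDefect μ 𝒞 (⋃ i, U i) := hdense _ hUW (.iUnion hU) hpos
    _ ≤ k * c := hupper
    _ = 2 * k * (c / 2) := by
      rw [mul_comm 2, mul_assoc, ENNReal.mul_div_cancel two_ne_zero ENNReal.ofNat_ne_top]

end Dense

theorem FiniteVC.exists_boundaryDefect_le_mul [IsFiniteMeasure μ] {𝒞 : Set (Set X)}
    (hVC : FiniteVC 𝒞) (h𝒞 : ∀ C ∈ 𝒞, MeasurableSet C) {δ : ℝ≥0∞} (hδ : δ ≠ 0) {W : Set X}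
    (hW : MeasurableSet W) (hWpos : 0 < μ W) :
    ∃ Q ⊆ W, MeasurableSet Q ∧ 0 < μ Q ∧ boundaryDefect μ 𝒞 Q ≤ δ * μ Q := by
  classical
  by_contra! hdense
  obtain ⟨k, hk⟩ := hVC
  have hat := isAtomlessOn_of_lt_boundaryDefect h𝒞 hdense
  obtain ⟨n, hn⟩ := ENNReal.exists_nat_mul_gt hδ (ENNReal.natCast_ne_top (2 * (k + 1)))
  obtain ⟨R, hR, hRd⟩ := hat.exists_seq_pairwise_disjoint hW hWpos
  have hRshrink : IsShrinking μ (.univ : Finset (Fin n)) (fun i => R i) (fun i => R i) :=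
    fun i _ => ⟨subset_rfl, (hR i).2⟩
  have hdisj : ∀ T, IsShrinking μ .univ T (fun i : Fin n => R i) → Pairwise (Disjoint on T) :=
    fun T hT i j hij => (hRd (Fin.val_injective.ne hij)).mono
      (hT i (Finset.mem_univ i)).1 (hT j (Finset.mem_univ j)).1
  by_cases hsplit : ∃ s : Finset (Fin n), s.card = k + 1 ∧
      ∃ T, IsShrinking μ .univ T (fun i : Fin n => R i) ∧ IsHereditarilySplit μ 𝒞 s T
  · obtain ⟨s, hs, T, hT, hTs⟩ := hsplit
    obtain ⟨D, hD, hDs⟩ := hTs.exists_shatters h𝒞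
      (fun i _ => ⟨subset_rfl, (hT i (Finset.mem_univ i)).2⟩)
      (fun i _ j _ hij => hdisj T hT hij)
    have := hk D hDs
    omega
  · push Not at hsplit
    obtain ⟨T, hT, hTdead⟩ := exists_isShrinking_forall_not_splits hRshrink
      (S := Finset.univ.powersetCard (k + 1))
      fun T hT s hs => hsplit s (Finset.mem_powersetCard.1 hs).2 T hT
    have hcard := card_mul_le_of_card_splits_le hat hdense
      (fun i => ⟨(hT i (Finset.mem_univ i)).1.trans (hR i).1, (hT i (Finset.mem_univ i)).2⟩)
      (hdisj T hT) fun C hC => Nat.lt_succ_iff.1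
        (Finset.card_filter_lt_of_forall_mem_powersetCard fun s hs => hTdead s hs C hC)
    rw [Fintype.card_fin] at hcard
    have : ((2 * (k + 1) : ℕ) : ℝ≥0∞) ≤ 2 * k := (hn.trans_le hcard).le
    norm_cast at this
    omega

theorem FiniteVC.boundaryDefect_le_mul_measure [IsFiniteMeasure μ] {𝒞 : Set (Set X)}
    (hVC : FiniteVC 𝒞) (h𝒞 : ∀ C ∈ 𝒞, MeasurableSet C) {δ : ℝ≥0∞} (hδ : δ ≠ 0) {E : Set X}
    (hE : MeasurableSet E) : boundaryDefect μ 𝒞 E ≤ δ * μ E := by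
  obtain ⟨F, hFc, hFd, hF, hnull⟩ := exists_pairwiseDisjoint_measure_diff_sUnion_eq_zero hE
    (p := fun A => boundaryDefect μ 𝒞 A ≤ δ * μ A) fun W _ hW hWpos =>
      hVC.exists_boundaryDefect_le_mul h𝒞 hδ hW hWpos
  have hFm : MeasurableSet (⋃₀ F) := .sUnion hFc fun A hA => (hF A hA).2.1
  calc boundaryDefect μ 𝒞 E
      = boundaryDefect μ 𝒞 (⋃₀ F ∪ (E \ ⋃₀ F)) := by
        rw [union_sdiff_cancel (sUnion_subset fun A hA => (hF A hA).1)]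
    _ ≤ boundaryDefect μ 𝒞 (⋃₀ F) + boundaryDefect μ 𝒞 (E \ ⋃₀ F) :=
      boundaryDefect_union_le disjoint_sdiff_right
    _ ≤ δ * μ (⋃₀ F) + 0 := add_le_add
      (boundaryDefect_sUnion_le hFc hFd (fun A hA => (hF A hA).2.1) fun A hA => (hF A hA).2.2)
      ((boundaryDefect_le_measure (hE.diff hFm)).trans hnull.le)
    _ ≤ δ * μ E := by
      rw [add_zero]
      exact mul_le_mul_right (measure_mono (sUnion_subset fun A hA => (hF A hA).1)) δ

end

/-- **Theorem 2.** If `𝒞` has finite VC dimension, then `𝒞` is finitely approximable with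
respect to every probability measure. -/
theorem finiteVC_finitelyApproximable {X : Type*} [MeasurableSpace X]
    (𝒞 : Set (Set X)) (h𝒞 : ∀ C ∈ 𝒞, MeasurableSet C) (hVC : FiniteVC 𝒞)
    (μ : Measure X) [IsProbabilityMeasure μ] :
    FinitelyApproximable μ 𝒞 := by
  intro ε hε
  have hzero : boundaryDefect μ 𝒞 univ = 0 := nonpos_iff_eq_zero.1 <|
    ENNReal.le_of_forall_pos_le_add fun η hη _ => by
      simpa using hVC.boundaryDefect_le_mul_measure (μ := μ) h𝒞
        (ENNReal.coe_ne_zero.2 hη.ne') MeasurableSet.univ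
  obtain ⟨P, hP, hPC⟩ := exists_isPartitionOf_of_boundaryDefect_lt (hzero.trans_lt hε)
  exact ⟨P, hP, fun C hC => (hPC C hC).le⟩
end

section
/- Let 𝒞 be any collection of subsets of a set 𝒳. The VC dimension dim(𝒞) is finite if and only if the dual VC dimension dim*(𝒞) is finite. -/
/-- The sets `A 0, …, A (k-1)` are Boolean independent: all `2^k` basic intersections
formed from the `A i` and their complements are nonempty. -/
def BooleanIndep {X : Type*} {k : ℕ} (A : Fin k → Set X) : Prop :=
  ∀ σ : Fin k → Bool, (⋂ i, (if σ i = true then A i else (A i)ᶜ)).Nonempty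

/-- `𝒞` has finite dual VC dimension: the sizes of Boolean independent subfamilies of `𝒞`
are bounded. -/
def FiniteDualVC {X : Type*} (𝒞 : Set (Set X)) : Prop :=
  ∃ k : ℕ, ∀ m : ℕ, ∀ A : Fin m → Set X,
    Function.Injective A → (∀ i, A i ∈ 𝒞) → BooleanIndep A → m ≤ k

/-- **Lemma (Assouad).** The VC dimension of `𝒞` is finite if and only if the dual VC
dimension of `𝒞` is finite. -/
theorem finiteVC_iff_finiteDualVC {X : Type*} (𝒞 : Set (Set X)) :
    FiniteVC 𝒞 ↔ FiniteDualVC 𝒞 := by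
  classical
  constructor
  · rintro ⟨k, hk⟩
    refine ⟨2 ^ (k + 1), fun m A hinj hmem hindep => ?_⟩
    by_contra hm
    push_neg at hm
    set n := k + 1 with hn
    have hcard : Fintype.card (Fin n → Bool) ≤ Fintype.card (Fin m) := by
      simp only [Fintype.card_fun, Fintype.card_bool, Fintype.card_fin]
      omega
    obtain ⟨e⟩ := Function.Embedding.nonempty_of_card_le hcard
    -- the sign pattern witnessing coordinate `j`
    set σ : Fin n → Fin m → Bool :=
      fun j i => if h : ∃ τ, e τ = i then h.choose j else false with hσ
    have hσe : ∀ (j : Fin n) (τ : Fin n → Bool), σ j (e τ) = τ j := by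
      intro j τ
      have h : ∃ τ', e τ' = e τ := ⟨τ, rfl⟩
      have : h.choose = τ := e.injective h.choose_spec
      simp [hσ, dif_pos h, this]
    -- pick witnesses
    have hp : ∀ j : Fin n, ∃ x, ∀ i, x ∈ (if σ j i = true then A i else (A i)ᶜ) := by
      intro j
      obtain ⟨x, hx⟩ := hindep (σ j)
      exact ⟨x, fun i => Set.mem_iInter.1 hx i⟩
    choose p hpmem using hp
    have hmemA : ∀ (j : Fin n) (τ : Fin n → Bool), p j ∈ A (e τ) ↔ τ j = true := by
      intro j τ
      have := hpmem j (e τ)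
      rw [hσe j τ] at this
      by_cases h : τ j = true
      · simp only [h, if_true] at this
        simp [h, this]
      · simp only [Bool.not_eq_true] at h
        simp only [h, Bool.false_eq_true, if_false] at this
        simp only [h, Bool.false_eq_true, iff_false]
        exact this
    have hpinj : Function.Injective p := by
      intro j j' hjj'
      by_contra hne
      set τ : Fin n → Bool := fun l => decide (l = j) with hτ
      have h1 : p j ∈ A (e τ) := (hmemA j τ).2 (by simp [hτ])
      have h2 : p j' ∉ A (e τ) := by
        rw [hmemA j' τ]
        simp only [hτ, decide_eq_true_eq]
        exact fun h => hne h.symm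
      exact h2 (hjj' ▸ h1)
    set D : Finset X := Finset.image p Finset.univ with hD
    have hDcard : D.card = n := by
      rw [hD, Finset.card_image_of_injective _ hpinj, Finset.card_univ, Fintype.card_fin]
    have hshat : Shatters 𝒞 D := by
      intro B hB
      set τ : Fin n → Bool := fun j => decide (p j ∈ B) with hτ
      refine ⟨A (e τ), hmem _, ?_⟩
      intro x hx
      obtain ⟨j, -, rfl⟩ := Finset.mem_image.1 hx
      rw [hmemA j τ]
      simp [hτ]
    have := hk D hshat
    omega
  · rintro ⟨k, hk⟩
    refine ⟨2 ^ (k + 1), fun D hD => ?_⟩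
    by_contra hm
    push_neg at hm
    set n := k + 1 with hn
    have hcard : Fintype.card (Fin n → Bool) ≤ Fintype.card {x // x ∈ D} := by
      simp only [Fintype.card_fun, Fintype.card_bool, Fintype.card_fin, Fintype.card_coe]
      omega
    obtain ⟨e⟩ := Function.Embedding.nonempty_of_card_le hcard
    have heinj : Function.Injective (fun τ : Fin n → Bool => ((e τ : X))) :=
      fun τ τ' h => e.injective (Subtype.coe_injective h)
    set B : Fin n → Finset X :=
      fun j => Finset.image (fun τ => ((e τ : X)))
        (Finset.univ.filter fun τ : Fin n → Bool => τ j = true) with hB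
    have hBsub : ∀ j, B j ⊆ D := by
      intro j x hx
      obtain ⟨τ, -, rfl⟩ := Finset.mem_image.1 hx
      exact (e τ).2
    have hC : ∀ j, ∃ C ∈ 𝒞, ∀ x ∈ D, x ∈ C ↔ x ∈ B j := fun j => hD (B j) (hBsub j)
    choose C hCmem hCspec using hC
    have hkey : ∀ (j : Fin n) (τ : Fin n → Bool), (e τ : X) ∈ C j ↔ τ j = true := by
      intro j τ
      rw [hCspec j (e τ) (e τ).2, hB]
      simp only [Finset.mem_image, Finset.mem_filter, Finset.mem_univ, true_and]
      constructor
      · rintro ⟨τ', hτ', h⟩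
        rwa [← heinj h]
      · intro h
        exact ⟨τ, h, rfl⟩
    have hCinj : Function.Injective C := by
      intro j j' hjj'
      by_contra hne
      set τ : Fin n → Bool := fun l => decide (l = j) with hτ
      have h1 : (e τ : X) ∈ C j := (hkey j τ).2 (by simp [hτ])
      have h2 : (e τ : X) ∉ C j' := by
        rw [hkey j' τ]
        simp only [hτ, decide_eq_true_eq]
        exact fun h => hne h.symm
      exact h2 (hjj' ▸ h1)
    have hCindep : BooleanIndep C := by
      intro σ
      refine ⟨(e σ : X), Set.mem_iInter.2 fun j => ?_⟩
      by_cases h : σ j = true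
      · simpa [h] using (hkey j σ).2 h
      · simp only [h, if_false]
        intro hx
        exact h ((hkey j σ).1 hx)
    have := hk n C hCinj hCmem hCindep
    omega
end

section
/- Let (𝒳, 𝒮, μ) be a probability space, let 𝒞 ⊆ 𝒮 be a separable family with finite VC dimension, and let {μₙ} be a sequence of finite measures on (𝒳, 𝒮) such that μₙ(A) → μ(A) for every A ∈ σ(𝒞), the sigma-field generated by 𝒞. Then sup_{C ∈ 𝒞} |μₙ(C) − μ(C)| → 0 as n → ∞. -/
open MeasureTheory Set Filter

/-- A family of sets is separable if some countable subfamily `𝒞₀ ⊆ 𝒞` is pointwise dense: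
every `C ∈ 𝒞` is a pointwise limit (of indicator functions) of a sequence from `𝒞₀`. -/
def SeparableSetFamily {X : Type*} (𝒞 : Set (Set X)) : Prop :=
  ∃ 𝒞₀ ⊆ 𝒞, 𝒞₀.Countable ∧ ∀ C ∈ 𝒞, ∃ g : ℕ → Set X, (∀ n, g n ∈ 𝒞₀) ∧
    ∀ x : X, ∀ᶠ n in Filter.atTop, (x ∈ g n ↔ x ∈ C)

/-- The family `ℱ` of real functions has finite bracketing numbers w.r.t. `μ`: for every
`ε > 0` finitely many `ε`-brackets (pairs of measurable functions `g ≤ h` with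
`∫ (h - g) dμ ≤ ε`) cover `ℱ`. -/
def FiniteBracketing {X : Type*} [MeasurableSpace X] (μ : Measure X)
    (ℱ : Set (X → ℝ)) : Prop :=
  ∀ ε : ℝ, 0 < ε → ∃ n : ℕ, ∃ g h : Fin n → X → ℝ,
    (∀ i, Measurable (g i) ∧ Measurable (h i) ∧ (∀ x, g i x ≤ h i x) ∧
      ∫⁻ x, ENNReal.ofReal (h i x - g i x) ∂μ ≤ ENNReal.ofReal ε) ∧
    ∀ f ∈ ℱ, ∃ i, ∀ x, g i x ≤ f x ∧ f x ≤ h i x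

/-
Setwise convergence on σ(𝒞) makes the μₙ uniformly absolutely continuous with respect to one
probability measure ν that dominates all of them (Vitali–Hahn–Saks): ν(B) small forces
μₙ(B) ≤ ε for every n, hence also μ(B) ≤ ε. A VC class is totally bounded for the pseudometric
ν(C ∆ D): if C₁, …, C_N are pairwise δ-apart, then by a union bound n independent ν-samples
separate all pairs once N² (1 - δ)ⁿ < 1, and then the Sauer–Shelah lemma gives
N ≤ ∑_{i ≤ k} (n choose i), which is polynomial in n. Approximating every C ∈ 𝒞 by one of finitely
many centres D reduces uniform convergence to convergence at the centres plus the uniformly small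
errors μₙ(C ∆ D) and μ(C ∆ D).
-/

open scoped ENNReal NNReal symmDiff Topology

theorem Nat.exists_not_iff_succ_of_not_iff {p : ℕ → Prop} {n m : ℕ} (hnm : n ≤ m)
    (h : ¬(p n ↔ p m)) : ∃ j, n ≤ j ∧ j < m ∧ ¬(p j ↔ p (j + 1)) := by
  induction m, hnm using Nat.le_induction with
  | base => exact absurd Iff.rfl h
  | succ m hnm ih =>
    by_cases hm : p m ↔ p (m + 1)
    · obtain ⟨j, hnj, hjm, hj⟩ := ih fun h' => h (h'.trans hm)
      exact ⟨j, hnj, hjm.trans m.lt_succ_self, hj⟩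
    · exact ⟨m, hnm, m.lt_succ_self, hm⟩

theorem Set.symmDiff_limsup_subset {α : Type*} (s : ℕ → Set α) (n : ℕ) :
    s n ∆ limsup s atTop ⊆ ⋃ j, s (n + j) ∆ s (n + j + 1) := by
  intro x hx
  obtain ⟨m, hnm, hm⟩ : ∃ m, n ≤ m ∧ ¬(x ∈ s n ↔ x ∈ s m) := by
    rcases mem_symmDiff.1 hx with ⟨hxn, hxL⟩ | ⟨hxL, hxn⟩
    · rw [mem_limsup_iff_frequently_mem, Filter.not_frequently] at hxL
      obtain ⟨m, hxm, hnm⟩ := (hxL.and (eventually_ge_atTop n)).exists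
      exact ⟨m, hnm, by tauto⟩
    · obtain ⟨m, hnm, hxm⟩ := frequently_atTop.1 (mem_limsup_iff_frequently_mem.1 hxL) n
      exact ⟨m, hnm, by tauto⟩
  obtain ⟨j, hnj, -, hj⟩ := Nat.exists_not_iff_succ_of_not_iff (p := (x ∈ s ·)) hnm hm
  refine mem_iUnion.2 ⟨j - n, ?_⟩
  rw [Nat.add_sub_cancel' hnj, mem_symmDiff]
  tauto

theorem exists_nonempty_isOpen_forall_dist_le_of_cauchySeq {M E : Type*} [TopologicalSpace M]
    [BaireSpace M] [Nonempty M] [PseudoMetricSpace E] {f : ℕ → M → E}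
    (hf : ∀ n, Continuous (f n)) (hcauchy : ∀ x, CauchySeq (f · x)) {ε : ℝ} (hε : 0 < ε) :
    ∃ N, ∃ U : Set M, IsOpen U ∧ U.Nonempty ∧
      ∀ x ∈ U, ∀ m ≥ N, ∀ n ≥ N, dist (f m x) (f n x) ≤ ε := by
  set F : ℕ → Set M := fun N => {x | ∀ m ≥ N, ∀ n ≥ N, dist (f m x) (f n x) ≤ ε}
  have hclosed (N : ℕ) : IsClosed (F N) := by
    simp only [F, ofPred_forall]
    exact isClosed_biInter fun m _ => isClosed_biInter fun n _ =>
      isClosed_le ((hf m).dist (hf n)) continuous_const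
  have hcover : ⋃ N, F N = univ := eq_univ_of_forall fun x => by
    obtain ⟨N, hN⟩ := Metric.cauchySeq_iff.1 (hcauchy x) ε hε
    exact mem_iUnion.2 ⟨N, fun m hm n hn => (hN m hm n hn).le⟩
  obtain ⟨N, hN⟩ := nonempty_interior_of_iUnion_of_closed hclosed hcover
  exact ⟨N, interior (F N), isOpen_interior, hN, fun x hx => interior_subset hx⟩

theorem Metric.totallyBounded_of_forall_packingNumber_ne_top {E : Type*} [PseudoEMetricSpace E]
    {A : Set E} (h : ∀ ε : ℝ≥0, 0 < ε → Metric.packingNumber ε A ≠ ⊤) : TotallyBounded A := by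
  refine EMetric.totallyBounded_iff'.2 fun ε hε => ?_
  obtain ⟨ε', hε'0, hε'⟩ := ENNReal.lt_iff_exists_nnreal_btwn.1 hε
  have hA := h ε' (by exact_mod_cast hε'0)
  refine ⟨maximalSeparatedSet ε' A, maximalSeparatedSet_subset,
    Set.encard_ne_top_iff.1 ((encard_maximalSeparatedSet hA).trans_ne hA), fun x hx => ?_⟩
  obtain ⟨y, hy, hxy⟩ := isCover_maximalSeparatedSet hA hx
  exact mem_iUnion₂.2 ⟨y, hy, hxy.trans_lt hε'⟩

open Finset in
theorem Nat.sum_Iic_choose_add_one_le {n : ℕ} (hn : 1 ≤ n) (k : ℕ) :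
    ∑ i ∈ Iic k, n.choose i + 1 ≤ (k + 2) * n ^ k := by
  have hsum : ∑ i ∈ Iic k, n.choose i ≤ ∑ _i ∈ Iic k, n ^ k :=
    sum_le_sum fun i hi => (n.choose_le_pow i).trans (Nat.pow_le_pow_right hn (mem_Iic.1 hi))
  rw [sum_const, Nat.card_Iic, smul_eq_mul] at hsum
  nlinarith [Nat.one_le_pow k n hn]

open Finset in
theorem exists_sq_sum_choose_mul_pow_lt_one (k : ℕ) {r : ℝ} (hr₀ : 0 ≤ r) (hr₁ : r < 1) :
    ∃ n : ℕ, ((∑ i ∈ Iic k, n.choose i : ℕ) + 1 : ℝ) ^ 2 * r ^ n < 1 := by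
  have hdom : Tendsto (fun n : ℕ => (k + 2 : ℝ) ^ 2 * ((n : ℝ) ^ (2 * k) * r ^ n)) atTop
      (𝓝 0) := by
    simpa using (tendsto_pow_const_mul_const_pow_of_abs_lt_one (2 * k)
      (abs_lt.2 ⟨by linarith, hr₁⟩)).const_mul ((k + 2 : ℝ) ^ 2)
  have hle : ∀ᶠ n : ℕ in atTop, ((∑ i ∈ Iic k, n.choose i : ℕ) + 1 : ℝ) ^ 2 * r ^ n ≤
      (k + 2 : ℝ) ^ 2 * ((n : ℝ) ^ (2 * k) * r ^ n) := by
    filter_upwards [eventually_ge_atTop 1] with n hn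
    have h : ((∑ i ∈ Iic k, n.choose i : ℕ) + 1 : ℝ) ≤ (k + 2) * (n : ℝ) ^ k := by
      exact_mod_cast Nat.sum_Iic_choose_add_one_le hn k
    calc _ ≤ ((k + 2) * (n : ℝ) ^ k) ^ 2 * r ^ n := by gcongr
      _ = _ := by ring
  have := squeeze_zero' (Eventually.of_forall fun n => by positivity) hle hdom
  exact (this.eventually (gt_mem_nhds one_pos)).exists

open Finset in
theorem card_le_sum_choose_of_injOn_preimage {X : Type*} {𝒞 : Set (Set X)} {k : ℕ}
    (hk : ∀ D : Finset X, Shatters 𝒞 D → D.card ≤ k) {F : Finset (Set X)} (hF : ↑F ⊆ 𝒞)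
    {n : ℕ} {ω : Fin n → X} (hω : InjOn (fun C => ω ⁻¹' C) F) :
    F.card ≤ ∑ i ∈ Iic k, n.choose i := by
  classical
  set tr : Set X → Finset (Fin n) := fun C => univ.filter (ω · ∈ C)
  have hmem_tr {i : Fin n} {C : Set X} : i ∈ tr C ↔ ω i ∈ C := by simp [tr]
  have htr : InjOn tr F := fun C hC D hD h => hω hC hD <| Set.ext fun i => by
    simpa only [hmem_tr, Set.mem_preimage] using Finset.ext_iff.1 h i
  set 𝒜 := F.image tr
  have hshat (s : Finset (Fin n)) (hs : 𝒜.Shatters s) : s.card ≤ k := by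
    have hinj : InjOn ω s := by
      intro i hi j hj hij
      obtain ⟨u, hu, hsu⟩ := hs.exists_inter_eq_singleton hi
      obtain ⟨C, -, rfl⟩ := mem_image.1 hu
      have hiC : ω i ∈ C := hmem_tr.1 (mem_inter.1 (hsu ▸ mem_singleton_self i)).2
      have hj' : j ∈ s ∩ tr C := mem_inter.2 ⟨hj, hmem_tr.2 (hij ▸ hiC)⟩
      exact (mem_singleton.1 (hsu ▸ hj')).symm
    rw [← card_image_of_injOn hinj]
    refine hk _ fun B _ => ?_
    obtain ⟨u, hu, hsu⟩ := hs (filter_subset (ω · ∈ B) s)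
    obtain ⟨C, hC, rfl⟩ := mem_image.1 hu
    refine ⟨C, hF hC, fun x hx => ?_⟩
    obtain ⟨i, hi, rfl⟩ := mem_image.1 hx
    simpa [hi, hmem_tr] using Finset.ext_iff.1 hsu i
  have hvc : 𝒜.vcDim ≤ k := Finset.sup_le fun s hs => hshat s (mem_shatterer.1 hs)
  calc F.card = 𝒜.card := (card_image_of_injOn htr).symm
    _ ≤ 𝒜.shatterer.card := card_le_card_shatterer 𝒜
    _ ≤ ∑ i ∈ Iic 𝒜.vcDim, n.choose i := by simpa using card_shatterer_le_sum_vcDim (𝒜 := 𝒜)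
    _ ≤ ∑ i ∈ Iic k, n.choose i := sum_le_sum_of_subset (Iic_subset_Iic.2 hvc)

namespace MeasureTheory

section MeasureAlgebra

variable {α : Type*} [MeasurableSpace α] {ν : Measure α}

instance : CompleteSpace (MeasuredSets ν) := by
  refine EMetric.complete_of_convergent_controlled_sequences (fun n => 2⁻¹ ^ n)
    (fun n => ENNReal.pow_pos (by simp) n) fun u hu => ?_
  let L : MeasuredSets ν :=
    ⟨limsup (fun n => (u n : Set α)) atTop, .measurableSet_limsup fun n => (u n).2⟩
  have hbound (n : ℕ) : edist (u n) L ≤ 2 * 2⁻¹ ^ n := calc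
    _ ≤ ν (⋃ j, (u (n + j) : Set α) ∆ u (n + j + 1)) :=
        measure_mono (symmDiff_limsup_subset (fun n => (u n : Set α)) n)
    _ ≤ ∑' j, ν ((u (n + j) : Set α) ∆ u (n + j + 1)) := measure_iUnion_le _
    _ ≤ ∑' j, (2⁻¹ : ℝ≥0∞) ^ n * 2⁻¹ ^ j := ENNReal.tsum_le_tsum fun j => by
        rw [← pow_add]
        exact (hu _ _ _ le_rfl (Nat.le_succ _)).le
    _ = 2 * 2⁻¹ ^ n := by
        rw [ENNReal.tsum_mul_left, ENNReal.tsum_geometric, ENNReal.one_sub_inv_two, inv_inv,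
          mul_comm]
  have hgeom : Tendsto (fun n : ℕ => 2 * (2⁻¹ : ℝ≥0∞) ^ n) atTop (𝓝 0) := by
    simpa using ENNReal.Tendsto.const_mul
      (ENNReal.tendsto_pow_atTop_nhds_zero_of_lt_one (by norm_num)) (Or.inr (by simp))
  exact ⟨L, tendsto_iff_edist_tendsto_0.2 (tendsto_of_tendsto_of_tendsto_of_le_of_le
    tendsto_const_nhds hgeom (fun _ => zero_le) hbound)⟩

variable [IsFiniteMeasure ν]

theorem MeasuredSets.continuous_measureReal_of_le_smul {ρ : Measure α} [IsFiniteMeasure ρ]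
    {c : ℝ≥0} (hρ : ρ ≤ c • ν) : Continuous fun s : MeasuredSets ν => ρ.real s :=
  LipschitzWith.continuous (K := c) <| LipschitzWith.of_dist_le_mul fun s t => by
    rw [Real.dist_eq, MeasuredSets.dist_def, ← measureReal_nnreal_smul_apply]
    exact (abs_measureReal_sub_le_measureReal_symmDiff s.2.nullMeasurableSet
      t.2.nullMeasurableSet).trans (ENNReal.toReal_mono (measure_ne_top _ _) (hρ _))

theorem MeasuredSets.dist_union_le (A : MeasuredSets ν) {s : Set α} (hs : MeasurableSet s) :
    dist (α := MeasuredSets ν) ⟨(A : Set α) ∪ s, A.2.union hs⟩ A ≤ ν.real s := by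
  change ν.real (((A : Set α) ∪ s) ∆ A) ≤ ν.real s
  refine measureReal_mono fun x hx => ?_
  simp only [mem_symmDiff, mem_union] at hx
  tauto

theorem MeasuredSets.dist_sdiff_le (A : MeasuredSets ν) {s : Set α} (hs : MeasurableSet s) :
    dist (α := MeasuredSets ν) ⟨(A : Set α) \ s, A.2.diff hs⟩ A ≤ ν.real s := by
  change ν.real (((A : Set α) \ s) ∆ A) ≤ ν.real s
  refine measureReal_mono fun x hx => ?_
  simp only [mem_symmDiff, Set.mem_sdiff] at hx
  tauto

end MeasureAlgebra

variable {α : Type*} [MeasurableSpace α]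

theorem measureReal_eq_union_sub_sdiff (ρ : Measure α) [IsFiniteMeasure ρ] (t : Set α)
    {s : Set α} (hs : MeasurableSet s) : ρ.real s = ρ.real (t ∪ s) - ρ.real (t \ s) := by
  rw [← sdiff_union_self, measureReal_union disjoint_sdiff_left hs]
  ring

theorem abs_measureReal_sub_le_add_symmDiff (ρ μ : Measure α) [IsFiniteMeasure ρ]
    [IsFiniteMeasure μ] {C D : Set α} (hC : MeasurableSet C) (hD : MeasurableSet D) :
    |ρ.real C - μ.real C| ≤ ρ.real (C ∆ D) + |ρ.real D - μ.real D| + μ.real (C ∆ D) := by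
  have hρ := abs_measureReal_sub_le_measureReal_symmDiff (μ := ρ) hC.nullMeasurableSet
    hD.nullMeasurableSet
  have hμ := abs_measureReal_sub_le_measureReal_symmDiff (μ := μ) hC.nullMeasurableSet
    hD.nullMeasurableSet
  have h₁ := abs_sub_le (ρ.real C) (ρ.real D) (μ.real C)
  have h₂ := abs_sub_le (ρ.real D) (μ.real D) (μ.real C)
  rw [abs_sub_comm (μ.real D)] at h₂
  linarith

/-- Vitali–Hahn–Saks. Baire category in the complete measure algebra of `ν` gives a ball
`B(A, η)` on which the `μs n`, `n ≥ N`, are uniformly Cauchy; a small set `s` is the difference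
of `A ∪ s` and `A \ s`, both in that ball, and for `n ≤ N` the domination `μs n ≤ c n • ν`
suffices. -/
theorem exists_pos_forall_measureReal_le_of_cauchySeq {ν : Measure α} [IsFiniteMeasure ν]
    {μs : ℕ → Measure α} [∀ n, IsFiniteMeasure (μs n)] (hdom : ∀ n, ∃ c : ℝ≥0, μs n ≤ c • ν)
    (hcauchy : ∀ s, MeasurableSet s → CauchySeq fun n => (μs n).real s) {ε : ℝ} (hε : 0 < ε) :
    ∃ δ > 0, ∀ s, MeasurableSet s → ν.real s < δ → ∀ n, (μs n).real s ≤ ε := by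
  choose c hc using hdom
  have : Nonempty (MeasuredSets ν) := ⟨⟨∅, .empty⟩⟩
  obtain ⟨N, U, hU, ⟨A, hA⟩, hUN⟩ := exists_nonempty_isOpen_forall_dist_le_of_cauchySeq
    (fun n => MeasuredSets.continuous_measureReal_of_le_smul (hc n)) (fun s => hcauchy s s.2)
    (ε := ε / 3) (by positivity)
  obtain ⟨η, hη, hball⟩ := Metric.isOpen_iff.1 hU A hA
  set K := (Finset.range (N + 1)).sup c
  have hK (n : ℕ) (hn : n ≤ N) (s : Set α) : (μs n).real s ≤ K * ν.real s := calc
    (μs n).real s ≤ (c n • ν).real s := ENNReal.toReal_mono (measure_ne_top _ _) (hc n s)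
    _ = c n * ν.real s := measureReal_nnreal_smul_apply _
    _ ≤ K * ν.real s := by
      gcongr
      exact Finset.le_sup (f := c) (Finset.mem_range.2 (Nat.lt_succ_of_le hn))
  refine ⟨min η (ε / 3 / (K + 1)), by positivity, fun s hs hsδ n => ?_⟩
  have hKs : K * ν.real s ≤ ε / 3 := calc
    K * ν.real s ≤ (K + 1) * (ε / 3 / (K + 1)) := by
      gcongr
      · linarith
      · exact hsδ.le.trans (min_le_right _ _)
    _ = ε / 3 := by field_simp
  rcases le_total n N with hn | hn
  · linarith [hK n hn s]
  have hsη : ν.real s < η := hsδ.trans_le (min_le_left _ _)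
  have h₁ : |(μs n).real (A ∪ s) - (μs N).real (A ∪ s)| ≤ ε / 3 :=
    hUN _ (hball ((MeasuredSets.dist_union_le A hs).trans_lt hsη)) n hn N le_rfl
  have h₂ : |(μs n).real (A \ s) - (μs N).real (A \ s)| ≤ ε / 3 :=
    hUN _ (hball ((MeasuredSets.dist_sdiff_le A hs).trans_lt hsη)) n hn N le_rfl
  rw [abs_le] at h₁ h₂
  linarith [hK N le_rfl s, measureReal_eq_union_sub_sdiff (μs n) A hs,
    measureReal_eq_union_sub_sdiff (μs N) A hs]

theorem exists_isProbabilityMeasure_forall_le_smul [Nonempty α] (μs : ℕ → Measure α)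
    [∀ n, IsFiniteMeasure (μs n)] :
    ∃ ν : Measure α, IsProbabilityMeasure ν ∧ ∀ n, ∃ c : ℝ≥0, μs n ≤ c • ν := by
  obtain ⟨x⟩ := ‹Nonempty α›
  set a : ℕ → ℝ≥0 := fun n => (μs n univ).toNNReal
  set w : ℕ → ℝ≥0 := fun n => (2 ^ n * (a n + 1))⁻¹
  have hw0 (n : ℕ) : w n ≠ 0 := by simp [w]
  have hwa (n : ℕ) : (w n • μs n) univ ≤ 2⁻¹ ^ n := by
    have h : w n * a n ≤ 2⁻¹ ^ n := calc
      w n * a n ≤ w n * (a n + 1) := by gcongr; exact le_self_add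
      _ = 2⁻¹ ^ n := by simp only [w]; rw [mul_inv, inv_mul_cancel_right₀ (by positivity), inv_pow]
    calc (w n • μs n) univ = (w n * a n : ℝ≥0) := by
          rw [Measure.smul_apply, ENNReal.smul_def, smul_eq_mul, ENNReal.coe_mul,
            ENNReal.coe_toNNReal (measure_ne_top _ _)]
      _ ≤ ((2⁻¹ ^ n : ℝ≥0) : ℝ≥0∞) := by exact_mod_cast h
      _ = 2⁻¹ ^ n := by simp [ENNReal.inv_pow]
  set ν₀ := Measure.dirac x + Measure.sum fun n => w n • μs n
  have : IsFiniteMeasure ν₀ := ⟨by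
    rw [Measure.add_apply, Measure.sum_apply _ MeasurableSet.univ]
    refine ENNReal.add_lt_top.2 ⟨measure_lt_top _ _, ?_⟩
    refine (ENNReal.tsum_le_tsum hwa).trans_lt ?_
    rw [ENNReal.tsum_geometric, ENNReal.one_sub_inv_two, inv_inv]
    exact ENNReal.ofNat_lt_top⟩
  have : NeZero ν₀ := ⟨fun h => by simpa [ν₀] using congrArg (· {x}) h⟩
  refine ⟨(ν₀ univ)⁻¹ • ν₀, isProbabilityMeasureSMul, fun n => ⟨(w n)⁻¹ * (ν₀ univ).toNNReal, ?_⟩⟩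
  refine Measure.le_iff'.2 fun s => ?_
  have hle : w n * μs n s ≤ ν₀ s :=
    (Measure.le_sum (fun n => w n • μs n) n s).trans le_add_self
  have hν₀ : ν₀ univ ≠ 0 := (Measure.measure_univ_ne_zero).2 (NeZero.ne ν₀)
  calc μs n s = (w n : ℝ≥0∞)⁻¹ * (w n * μs n s) := by
        rw [← mul_assoc, ENNReal.inv_mul_cancel (by simpa using hw0 n) ENNReal.coe_ne_top, one_mul]
    _ ≤ (w n : ℝ≥0∞)⁻¹ * ν₀ s := by gcongr
    _ = (((w n)⁻¹ * (ν₀ univ).toNNReal) • ((ν₀ univ)⁻¹ • ν₀)) s := by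
        simp only [Measure.smul_apply, ENNReal.smul_def, smul_eq_mul, ENNReal.coe_mul,
          ENNReal.coe_inv (hw0 n), ENNReal.coe_toNNReal (measure_ne_top _ _)]
        rw [mul_assoc, ← mul_assoc (ν₀ univ), ENNReal.mul_inv_cancel hν₀ (measure_ne_top _ _),
          one_mul]

theorem exists_injOn_preimage_of_measureReal_compl_symmDiff_le {X : Type*} [MeasurableSpace X]
    (ν : Measure X) [IsProbabilityMeasure ν] {F : Finset (Set X)} {r : ℝ} (hr : 0 ≤ r)
    (hF : ∀ C ∈ F, ∀ D ∈ F, C ≠ D → ν.real (C ∆ D)ᶜ ≤ r) {n : ℕ}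
    (hn : (F.card : ℝ) ^ 2 * r ^ n < 1) :
    ∃ ω : Fin n → X, InjOn (fun C => ω ⁻¹' C) F := by
  classical
  set P := Measure.pi fun _ : Fin n => ν
  set bad : Set X × Set X → Set (Fin n → X) := fun p => univ.pi fun _ => (p.1 ∆ p.2)ᶜ
  have hbad : ∀ p ∈ F.offDiag, P.real (bad p) ≤ r ^ n := by
    intro p hp
    obtain ⟨h₁, h₂, hne⟩ := Finset.mem_offDiag.1 hp
    simp only [P, bad, Measure.real, Measure.pi_pi, Finset.prod_const, ENNReal.toReal_pow,
      Finset.card_univ, Fintype.card_fin]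
    exact pow_le_pow_left₀ ENNReal.toReal_nonneg (hF _ h₁ _ h₂ hne) n
  have hunion : P.real (⋃ p ∈ F.offDiag, bad p) < 1 := calc
    _ ≤ ∑ p ∈ F.offDiag, P.real (bad p) := measureReal_biUnion_finset_le _ _
    _ ≤ F.offDiag.card * r ^ n := by
        simpa using Finset.sum_le_sum hbad
    _ ≤ (F.card : ℝ) ^ 2 * r ^ n := by
        gcongr
        rw [Finset.offDiag_card, sq]
        exact_mod_cast Nat.sub_le _ _
    _ < 1 := hn
  obtain ⟨ω, hω⟩ := (ne_univ_iff_exists_notMem (⋃ p ∈ F.offDiag, bad p)).1 fun h => by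
    rw [h, probReal_univ] at hunion
    exact lt_irrefl _ hunion
  refine ⟨ω, fun C hC D hD hCD => by_contra fun hne => hω ?_⟩
  refine mem_iUnion₂.2 ⟨(C, D), Finset.mem_offDiag.2 ⟨hC, hD, hne⟩, mem_univ_pi.2 fun i => ?_⟩
  have := congrArg (i ∈ ·) hCD
  simp only [mem_preimage, eq_iff_iff] at this
  simp [this]

open Finset in
theorem packingNumber_measuredSets_ne_top_of_finiteVC {X : Type*} [MeasurableSpace X]
    {ν : Measure X} [IsProbabilityMeasure ν] {𝒞 : Set (Set X)} (hVC : FiniteVC 𝒞) {δ : ℝ≥0}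
    (hδ : 0 < δ) : Metric.packingNumber δ {s : MeasuredSets ν | (s : Set X) ∈ 𝒞} ≠ ⊤ := by
  obtain ⟨k, hk⟩ := hVC
  -- a single `ν`-sample misses a set of measure `> δ` with probability at most `r`
  set r : ℝ := 1 - min δ 1
  obtain ⟨n, hn⟩ := exists_sq_sum_choose_mul_pow_lt_one k (r := r) (by simp [r])
    (by simpa [r] using hδ)
  set N := ∑ i ∈ Iic k, n.choose i
  refine ne_top_of_le_ne_top (ENat.natCast_ne_top N) (iSup₂_le fun 𝒮 h𝒮 => iSup_le fun hsep => ?_)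
  by_contra! hlt
  obtain ⟨T, hT𝒮, hTcard⟩ := exists_subset_encard_eq (Order.add_one_le_of_lt hlt)
  have hTfin : T.Finite := finite_of_encard_eq_coe hTcard
  set F : Finset (Set X) := hTfin.toFinset.image (↑)
  have hmemF {C : Set X} : C ∈ F ↔ ∃ a ∈ T, (a : Set X) = C := by simp [F]
  have hFcard : F.card = N + 1 := by
    rw [Finset.card_image_of_injective _ SetLike.coe_injective]
    exact_mod_cast hTfin.encard_eq_coe_toFinset_card.symm.trans hTcard
  have hF : ∀ C ∈ F, ∀ D ∈ F, C ≠ D → ν.real (C ∆ D)ᶜ ≤ r := by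
    intro C hC D hD hCD
    obtain ⟨a, ha, rfl⟩ := hmemF.1 hC
    obtain ⟨b, hb, rfl⟩ := hmemF.1 hD
    have hδab : (δ : ℝ) < ν.real (a ∆ b) := by
      have := hsep (hT𝒮 ha) (hT𝒮 hb) (fun h => hCD (congrArg _ h))
      exact (ENNReal.toReal_lt_toReal ENNReal.coe_ne_top (measure_ne_top _ _)).2 this
    have hab : MeasurableSet ((a : Set X) ∆ b) := a.2.symmDiff b.2
    have hmin : ((min δ 1 : ℝ≥0) : ℝ) ≤ δ := by exact_mod_cast min_le_left δ 1
    rw [probReal_compl_eq_one_sub hab]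
    linarith
  obtain ⟨ω, hω⟩ := exists_injOn_preimage_of_measureReal_compl_symmDiff_le ν
    (r := r) (by simp [r]) hF (n := n) (by rw [hFcard]; exact_mod_cast hn)
  have := card_le_sum_choose_of_injOn_preimage hk (F := F) (fun C hC => by
    obtain ⟨a, ha, rfl⟩ := hmemF.1 hC
    exact h𝒮 (hT𝒮 ha)) hω
  omega

theorem totallyBounded_measuredSets_of_finiteVC {X : Type*} [MeasurableSpace X]
    {ν : Measure X} [IsProbabilityMeasure ν] {𝒞 : Set (Set X)} (hVC : FiniteVC 𝒞) :
    TotallyBounded {s : MeasuredSets ν | (s : Set X) ∈ 𝒞} :=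
  Metric.totallyBounded_of_forall_packingNumber_ne_top fun _ hδ =>
    packingNumber_measuredSets_ne_top_of_finiteVC hVC hδ

theorem tendsto_iSup_abs_measureReal_sub_of_finiteVC {X : Type*} [mX : MeasurableSpace X]
    {μ : Measure X} [IsFiniteMeasure μ] {𝒞 : Set (Set X)} (h𝒞 : ∀ C ∈ 𝒞, MeasurableSet C)
    (hVC : FiniteVC 𝒞) {μs : ℕ → Measure X} [∀ n, IsFiniteMeasure (μs n)]
    (hconv : ∀ s, MeasurableSet s → Tendsto (fun n => μs n s) atTop (𝓝 (μ s))) :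
    Tendsto (fun n => ⨆ C : 𝒞, |(μs n).real C - μ.real C|) atTop (𝓝 0) := by
  rcases isEmpty_or_nonempty X with hX | hX
  · simp [Set.eq_empty_of_isEmpty]
  have hconv' (s : Set X) (hs : MeasurableSet s) :
      Tendsto (fun n => (μs n).real s) atTop (𝓝 (μ.real s)) :=
    (ENNReal.tendsto_toReal (measure_ne_top μ s)).comp (hconv s hs)
  obtain ⟨ν, hν, hdom⟩ := exists_isProbabilityMeasure_forall_le_smul μs
  refine tendsto_order.2 ⟨fun a ha => Eventually.of_forall fun n =>
    ha.trans_le (Real.iSup_nonneg fun _ => abs_nonneg _), fun ε hε => ?_⟩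
  obtain ⟨δ, hδ, hsmall⟩ := exists_pos_forall_measureReal_le_of_cauchySeq hdom
    (fun s hs => (hconv' s hs).cauchySeq) (ε := ε / 4) (by positivity)
  have hμsmall (s : Set X) (hs : MeasurableSet s) (hνs : ν.real s < δ) : μ.real s ≤ ε / 4 :=
    le_of_tendsto' (hconv' s hs) (hsmall s hs hνs)
  obtain ⟨𝒩, h𝒩𝒞, h𝒩, h𝒩cover⟩ := Metric.exists_finite_isCover_of_totallyBounded
    (ε := (δ / 2).toNNReal) (by simpa using hδ)
    (totallyBounded_measuredSets_of_finiteVC (ν := ν) hVC)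
  have hnet : ∀ᶠ n in atTop, ∀ D ∈ 𝒩, |(μs n).real D - μ.real D| ≤ ε / 4 :=
    h𝒩.eventually_all.2 fun D _ => by
      simpa only [Metric.mem_closedBall, Real.dist_eq] using
        (hconv' D D.2).eventually (Metric.closedBall_mem_nhds _ (by positivity : 0 < ε / 4))
  filter_upwards [hnet] with n hn
  refine (Real.iSup_le (fun C => ?_) (by positivity)).trans_lt (by linarith : 3 * (ε / 4) < ε)
  obtain ⟨D, hD𝒩, hCD⟩ := h𝒩cover (x := ⟨C, h𝒞 C C.2⟩) C.2
  have hνCD : ν.real ((C : Set X) ∆ D) < δ :=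
    (ENNReal.toReal_le_of_le_ofReal (by positivity) hCD).trans_lt (half_lt_self hδ)
  have hDm : MeasurableSet (D : Set X) := D.2
  have hCDm := (h𝒞 C C.2).symmDiff hDm
  linarith [abs_measureReal_sub_le_add_symmDiff (μs n) μ (h𝒞 C C.2) hDm,
    hsmall _ hCDm hνCD n, hμsmall _ hCDm hνCD, hn D hD𝒩]

end MeasureTheory

theorem uniform_convergence_over_vc_general {X : Type*} [MeasurableSpace X]
    (μ : Measure X) [IsProbabilityMeasure μ] (𝒞 : Set (Set X))
    (h𝒞 : ∀ C ∈ 𝒞, MeasurableSet C) (hVC : FiniteVC 𝒞)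
    (μs : ℕ → Measure X) (hfin : ∀ n, IsFiniteMeasure (μs n))
    (hconv : ∀ A : Set X, MeasurableSet[MeasurableSpace.generateFrom 𝒞] A →
      Filter.Tendsto (fun n => μs n A) Filter.atTop (nhds (μ A))) :
    Filter.Tendsto
      (fun n => ⨆ C : 𝒞, |(μs n (C : Set X)).toReal - (μ (C : Set X)).toReal|)
      Filter.atTop (nhds 0) := by
  have hS := MeasurableSpace.generateFrom_le h𝒞
  have h𝒞S (C : 𝒞) : MeasurableSet[MeasurableSpace.generateFrom 𝒞] C :=
    MeasurableSpace.measurableSet_generateFrom C.2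
  have key := tendsto_iSup_abs_measureReal_sub_of_finiteVC (mX := MeasurableSpace.generateFrom 𝒞)
    (μ := μ.trim hS) (μs := fun n => (μs n).trim hS) (fun C hC => h𝒞S ⟨C, hC⟩) hVC
    fun s hs => by simpa only [trim_measurableSet_eq hS hs] using hconv s hs
  simpa only [Measure.real, trim_measurableSet_eq hS (h𝒞S _)] using key

/-- **Uniform convergence of measures over a VC class (Gaenssler–Stute).** If `𝒞` is a
separable VC class and `{μₙ}` are finite measures with `μₙ(A) → μ(A)` for every
`A ∈ σ(𝒞)`, then the convergence is uniform over `𝒞`. -/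
theorem uniform_convergence_over_vc {X : Type*} [MeasurableSpace X]
    (μ : Measure X) [IsProbabilityMeasure μ] (𝒞 : Set (Set X))
    (h𝒞 : ∀ C ∈ 𝒞, MeasurableSet C) (hsep : SeparableSetFamily 𝒞) (hVC : FiniteVC 𝒞)
    (μs : ℕ → Measure X) (hfin : ∀ n, IsFiniteMeasure (μs n))
    (hconv : ∀ A : Set X, MeasurableSet[MeasurableSpace.generateFrom 𝒞] A →
      Filter.Tendsto (fun n => μs n A) Filter.atTop (nhds (μ A))) :
    Filter.Tendsto
      (fun n => ⨆ C : 𝒞, |(μs n (C : Set X)).toReal - (μ (C : Set X)).toReal|)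
      Filter.atTop (nhds 0) :=
  uniform_convergence_over_vc_general μ 𝒞 h𝒞 hVC μs hfin hconv
end

section
/- Let 𝒞 be the family of all Borel subsets of the unit interval [0,1] and let μ be a probability measure on [0,1] with countable support. Then 𝒞 is finitely approximable with respect to μ. -/
open MeasureTheory Set Filter

/-- If `μ` is a probability measure on `[0,1]` with countable support, then the family of
all Borel subsets of `[0,1]` is finitely approximable with respect to `μ`. -/
theorem borel_finitelyApproximable_of_countable_support
    (μ : Measure (Set.Icc (0 : ℝ) 1)) [IsProbabilityMeasure μ]
    (hsupp : ∃ s : Set (Set.Icc (0 : ℝ) 1), s.Countable ∧ μ s = 1) :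
    FinitelyApproximable μ {C : Set (Set.Icc (0 : ℝ) 1) | MeasurableSet C} := by
  intro ε hε
  obtain ⟨s, hscount, hs1⟩ := hsupp
  -- μ s = ∑' over points of s
  have htsum : (∑' b : s, μ {(b : Set.Icc (0 : ℝ) 1)}) = μ s := by
    have := tsum_measure_preimage_singleton (μ := μ) hscount
      (f := id) (fun y _ => measurableSet_singleton y)
    simpa using this
  -- find a finite subset with large measure
  have hlt : (1 : ENNReal) - ε < ∑' b : s, μ {(b : Set.Icc (0 : ℝ) 1)} := by
    rw [htsum, hs1]
    exact ENNReal.sub_lt_self ENNReal.one_ne_top one_ne_zero hε.ne'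
  rw [ENNReal.tsum_eq_iSup_sum] at hlt
  obtain ⟨u, hu⟩ := lt_iSup_iff.mp hlt
  set t : Finset (Set.Icc (0 : ℝ) 1) := u.image Subtype.val with ht
  have hsum_le : ∑ b ∈ u, μ {(b : Set.Icc (0 : ℝ) 1)} ≤ μ (↑t : Set (Set.Icc (0 : ℝ) 1)) := by
    have h1 : ∑ b ∈ t, μ {b} = μ (↑t : Set (Set.Icc (0 : ℝ) 1)) := by
      have := sum_measure_preimage_singleton (μ := μ) t
        (f := id) (fun y _ => measurableSet_singleton y)
      simpa using this
    rw [← h1, ht, Finset.sum_image (fun a _ b _ h => Subtype.val_injective h)]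
  have hμt : (1 : ENNReal) - ε ≤ μ (↑t : Set (Set.Icc (0 : ℝ) 1)) :=
    (lt_of_lt_of_le hu hsum_le).le
  have htmeas : MeasurableSet (↑t : Set (Set.Icc (0 : ℝ) 1)) := t.finite_toSet.measurableSet
  have hcompl : μ ((↑t : Set (Set.Icc (0 : ℝ) 1))ᶜ) ≤ ε := by
    rw [prob_compl_eq_one_sub htmeas, tsub_le_iff_left]
    rw [tsub_le_iff_left] at hμt
    rwa [add_comm] at hμt
  -- the partition: singletons from t plus the complement of t
  refine ⟨(fun x => ({x} : Set (Set.Icc (0 : ℝ) 1))) '' ↑t ∪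
    {(↑t : Set (Set.Icc (0 : ℝ) 1))ᶜ}, ⟨?_, ?_, ?_, ?_⟩, ?_⟩
  · exact (t.finite_toSet.image _).union (finite_singleton _)
  · rintro A (⟨x, _, rfl⟩ | hA)
    · exact measurableSet_singleton x
    · rw [mem_singleton_iff] at hA
      exact hA ▸ htmeas.compl
  · rintro A (⟨x, hx, rfl⟩ | hA) B (⟨y, hy, rfl⟩ | hB) hne
    · simp only [Set.disjoint_singleton]
      intro h; exact hne (by rw [h])
    · rw [mem_singleton_iff] at hB
      subst hB
      exact Set.disjoint_singleton_left.mpr (fun h => h hx)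
    · rw [mem_singleton_iff] at hA
      subst hA
      exact Set.disjoint_singleton_right.mpr (fun h => h hy)
    · rw [mem_singleton_iff] at hA hB
      exact absurd (hA.trans hB.symm) hne
  · apply Set.eq_univ_of_forall
    intro x
    by_cases hx : x ∈ (↑t : Set (Set.Icc (0 : ℝ) 1))
    · exact ⟨{x}, Or.inl ⟨x, hx, rfl⟩, rfl⟩
    · exact ⟨(↑t : Set (Set.Icc (0 : ℝ) 1))ᶜ, Or.inr rfl, hx⟩
  · intro C _
    refine le_trans (measure_mono ?_) hcompl
    intro y hy
    obtain ⟨A, ⟨hA, hpos⟩, hyA⟩ := hy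
    rcases hA with ⟨x, _, rfl⟩ | hA
    · exfalso
      rcases Classical.em (x ∈ C) with hC | hC
      · have : ({x} : Set (Set.Icc (0 : ℝ) 1)) ∩ Cᶜ = ∅ := by
          ext z; simp (config := { contextual := true }) [hC]
        rw [this] at hpos
        simp at hpos
      · have : ({x} : Set (Set.Icc (0 : ℝ) 1)) ∩ C = ∅ := by
          ext z; simp (config := { contextual := true }) [hC]
        rw [this] at hpos
        simp at hpos
    · rw [mem_singleton_iff] at hA
      exact hA ▸ hyA
end

section
/- Let 𝒞 be the family of all Borel subsets of the unit interval [0,1] and let μ be a probability measure on [0,1] that is absolutely continuous with respect to Lebesgue measure. Then 𝒞 is not finitely approximable with respect to μ. -/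
open MeasureTheory Set Filter

/-!
Every Borel set `s` of positive `μ`-measure splits into two Borel pieces of positive measure:
the support of `μ.restrict s` is conull and, singletons being null, contains two distinct points,
which disjoint open neighbourhoods separate. Given a finite partition, split every cell of positive
measure this way and let `C` be the union of the chosen pieces; each such cell then lies in the
`π`-boundary of `C`, so the boundary has full measure.
-/

theorem IsFinitePartition.measure_piBoundary_eq_univ {X : Type*} [MeasurableSpace X]
    {μ : Measure X} {π : Set (Set X)} (hπ : IsFinitePartition π) {C : Set X}
    (hC : ∀ A ∈ π, 0 < μ A → 0 < μ (A ∩ C) * μ (A ∩ Cᶜ)) :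
    μ (piBoundary μ π C) = μ univ := by
  obtain ⟨hfin, -, -, hcover⟩ := hπ
  refine measure_congr <| ae_eq_univ.2 <|
    measure_mono_null (t := ⋃ A ∈ {A ∈ π | μ A = 0}, A) ?_ ?_
  · intro x hx
    obtain ⟨A, hA, hxA⟩ := mem_sUnion.1 (hcover.symm ▸ mem_univ x : x ∈ ⋃₀ π)
    refine mem_biUnion ⟨hA, ?_⟩ hxA
    by_contra hμA
    exact hx ⟨A, ⟨hA, hC A hA (pos_iff_ne_zero.2 hμA)⟩, hxA⟩
  · exact (measure_biUnion_null_iff (hfin.subset (sep_subset _ _)).countable).2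
      fun A hA ↦ hA.2

theorem IsFinitePartition.inter_biUnion_eq {X : Type*} [MeasurableSpace X] {π : Set (Set X)}
    (hπ : IsFinitePartition π) {t : Set X → Set X} (ht : ∀ A, t A ⊆ A) {A : Set X}
    (hA : A ∈ π) : A ∩ ⋃ B ∈ π, t B = t A := by
  refine Subset.antisymm ?_ fun x hx ↦ ⟨ht A hx, mem_biUnion hA hx⟩
  rintro x ⟨hxA, hx⟩
  obtain ⟨B, hB, hxB⟩ := mem_iUnion₂.1 hx
  obtain rfl : A = B := by
    by_contra hAB
    exact disjoint_left.1 (hπ.2.2.1 A hA B hB hAB) hxA (ht B hxB)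
  exact hxB

namespace MeasureTheory.Measure

def Atomless {X : Type*} [MeasurableSpace X] (μ : Measure X) : Prop :=
  ∀ s, MeasurableSet s → 0 < μ s →
    ∃ t ⊆ s, MeasurableSet t ∧ 0 < μ t ∧ 0 < μ (s \ t)

theorem atomless_of_nullSingletonClass {X : Type*} [TopologicalSpace X]
    [T2Space X] [HereditarilyLindelofSpace X] [MeasurableSpace X] [OpensMeasurableSpace X]
    (μ : Measure X) [NullSingletonClass μ] : μ.Atomless := by
  intro s hs hμs
  obtain ⟨x, hx, y, hy, hxy⟩ : (μ.restrict s).support.Nontrivial := by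
    by_contra hsub
    have hnull : μ.restrict s ((μ.restrict s).support ∪ (μ.restrict s).supportᶜ) = 0 :=
      measure_union_null ((not_nontrivial_iff.1 hsub).measure_zero _) measure_compl_support
    rw [union_compl_self, restrict_apply_univ] at hnull
    exact hμs.ne' hnull
  obtain ⟨U, V, hU, hV, hxU, hyV, hUV⟩ := t2_separation hxy
  have hμU := (mem_support_iff_forall x).1 hx U (hU.mem_nhds hxU)
  have hμV := (mem_support_iff_forall y).1 hy V (hV.mem_nhds hyV)
  rw [restrict_apply hU.measurableSet, inter_comm] at hμU
  rw [restrict_apply hV.measurableSet, inter_comm] at hμV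
  refine ⟨s ∩ U, inter_subset_left, hs.inter hU.measurableSet, hμU,
    hμV.trans_le (measure_mono ?_)⟩
  rw [sdiff_self_inter]
  exact inter_subset_inter_right s hUV.subset_compl_left

theorem Atomless.exists_measurableSet_measure_piBoundary_eq {X : Type*}
    [MeasurableSpace X] {μ : Measure X} (hμ : μ.Atomless) {π : Set (Set X)}
    (hπ : IsFinitePartition π) :
    ∃ C, MeasurableSet C ∧ μ (piBoundary μ π C) = μ univ := by
  have hsplit : ∀ A, ∃ t ⊆ A, MeasurableSet t ∧
      (A ∈ π → 0 < μ A → 0 < μ t ∧ 0 < μ (A \ t)) := by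
    intro A
    by_cases hA : A ∈ π ∧ 0 < μ A
    · obtain ⟨t, htA, ht, hpos, hpos'⟩ := hμ A (hπ.2.1 A hA.1) hA.2
      exact ⟨t, htA, ht, fun _ _ ↦ ⟨hpos, hpos'⟩⟩
    · exact ⟨∅, empty_subset A, .empty, fun h h' ↦ (hA ⟨h, h'⟩).elim⟩
  choose t htA ht hpos using hsplit
  refine ⟨⋃ A ∈ π, t A, .biUnion hπ.1.countable fun A _ ↦ ht A,
    hπ.measure_piBoundary_eq_univ fun A hA hμA ↦ ?_⟩
  obtain ⟨hpos, hpos'⟩ := hpos A hA hμA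
  rw [← sdiff_eq, ← sdiff_self_inter, hπ.inter_biUnion_eq htA hA]
  exact ENNReal.mul_pos hpos.ne' hpos'.ne'

theorem Atomless.not_finitelyApproximable {X : Type*} [MeasurableSpace X]
    {μ : Measure X} (hμ : μ.Atomless) (hμ₀ : μ ≠ 0) :
    ¬ FinitelyApproximable μ {C | MeasurableSet C} := by
  intro happrox
  -- `ε` is capped by `1` so that `ε < μ univ` also when `μ univ = ∞`.
  have hm : min 1 (μ univ) ≠ 0 := by simp [hμ₀]
  obtain ⟨π, hπ, hbound⟩ := happrox (min 1 (μ univ) / 2) (ENNReal.half_pos hm)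
  obtain ⟨C, hC, hfull⟩ := hμ.exists_measurableSet_measure_piBoundary_eq hπ
  have hlt : min 1 (μ univ) / 2 < μ univ :=
    (ENNReal.half_lt_self hm (by simp)).trans_le (min_le_right _ _)
  exact (hbound C hC).not_gt (hfull ▸ hlt)

end MeasureTheory.Measure

/-- If `μ` is a probability measure on `[0,1]` absolutely continuous with respect to
Lebesgue measure, then the family of all Borel subsets of `[0,1]` is not finitely
approximable with respect to `μ`. -/
theorem borel_not_finitelyApproximable_of_absolutelyContinuous
    (μ : Measure (Set.Icc (0 : ℝ) 1)) [IsProbabilityMeasure μ]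
    (habs : μ ≪ Measure.comap (Subtype.val : Set.Icc (0 : ℝ) 1 → ℝ) volume) :
    ¬ FinitelyApproximable μ {C : Set (Set.Icc (0 : ℝ) 1) | MeasurableSet C} := by
  have : NullSingletonClass μ :=
    ⟨fun x ↦ habs (measure_singleton (μ := (volume : Measure unitInterval)) x)⟩
  exact (Measure.atomless_of_nullSingletonClass μ).not_finitelyApproximable
    (IsProbabilityMeasure.ne_zero μ)
end

section
/- Let (𝒳, 𝒮, μ) be a probability space, 𝒞 ⊆ 𝒮, and let 𝒞₀ ⊆ 𝒞 be a countable subfamily such that inf_{C' ∈ 𝒞₀} μ(C' Δ C) = 0 for every C ∈ 𝒞. Then for every finite measurable partition π of 𝒳, sup_{C ∈ 𝒞} μ(∂(C : π)) = sup_{C ∈ 𝒞₀} μ(∂(C : π)). -/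
open MeasureTheory Set Filter

/-- If `𝒞₀ ⊆ 𝒞` is a countable subfamily with `inf_{C' ∈ 𝒞₀} μ(C' Δ C) = 0` for every
`C ∈ 𝒞`, then for every finite measurable partition `π` the suprema of the boundary
measures over `𝒞` and over `𝒞₀` coincide. -/
theorem sup_boundary_eq_of_dense_subfamily {X : Type*} [MeasurableSpace X]
    (μ : Measure X) [IsProbabilityMeasure μ] (𝒞 𝒞₀ : Set (Set X))
    (h𝒞 : ∀ C ∈ 𝒞, MeasurableSet C) (hsub : 𝒞₀ ⊆ 𝒞) (hcount : 𝒞₀.Countable)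
    (hdense : ∀ C ∈ 𝒞, ⨅ C' ∈ 𝒞₀, μ (symmDiff C' C) = 0)
    (π : Set (Set X)) (hπ : IsFinitePartition π) :
    ⨆ C ∈ 𝒞, μ (piBoundary μ π C) = ⨆ C ∈ 𝒞₀, μ (piBoundary μ π C) := by
  apply le_antisymm
  · apply iSup₂_le
    intro C hC
    classical
    set S : Set (Set X) := {A ∈ π | 0 < μ (A ∩ C) * μ (A ∩ Cᶜ)} with hS
    have hSfin : S.Finite := hπ.1.subset (fun A hA => hA.1)
    rcases S.eq_empty_or_nonempty with hSe | hSne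
    · have : piBoundary μ π C = ∅ := by
        rw [piBoundary, ← hS, hSe, Set.sUnion_empty]
      simp [this]
    · have hSne' : hSfin.toFinset.Nonempty := by
        simpa using hSne
      set δ : ENNReal := hSfin.toFinset.inf' hSne' (fun A => min (μ (A ∩ C)) (μ (A ∩ Cᶜ)))
        with hδ
      have hδpos : 0 < δ := by
        rw [hδ, Finset.lt_inf'_iff]
        intro A hA
        have hA' : A ∈ S := hSfin.mem_toFinset.mp hA
        have h1 : μ (A ∩ C) ≠ 0 ∧ μ (A ∩ Cᶜ) ≠ 0 := by
          rw [← mul_ne_zero_iff]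
          exact hA'.2.ne'
        exact lt_min (pos_iff_ne_zero.mpr h1.1) (pos_iff_ne_zero.mpr h1.2)
      have hδle : ∀ A ∈ S, δ ≤ μ (A ∩ C) ∧ δ ≤ μ (A ∩ Cᶜ) := by
        intro A hA
        have := Finset.inf'_le (fun A => min (μ (A ∩ C)) (μ (A ∩ Cᶜ)))
          (hSfin.mem_toFinset.mpr hA)
        exact ⟨le_trans this (min_le_left _ _), le_trans this (min_le_right _ _)⟩
      have hlt : (⨅ C' ∈ 𝒞₀, μ (symmDiff C' C)) < δ := by
        rw [hdense C hC]; exact hδpos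
      simp only [iInf_lt_iff] at hlt
      obtain ⟨C', hC', hdlt⟩ := hlt
      have hsubset : piBoundary μ π C ⊆ piBoundary μ π C' := by
        apply Set.sUnion_subset_sUnion
        intro A hA
        refine ⟨hA.1, ?_⟩
        have hδA := hδle A hA
        have key1 : μ (A ∩ C') ≠ 0 := by
          intro h0
          have hsub1 : A ∩ C ⊆ (A ∩ C') ∪ symmDiff C' C := by
            intro x ⟨hxA, hxC⟩
            by_cases hx : x ∈ C'
            · exact Or.inl ⟨hxA, hx⟩
            · exact Or.inr (Or.inr ⟨hxC, hx⟩)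
          have : μ (A ∩ C) ≤ μ (A ∩ C') + μ (symmDiff C' C) :=
            le_trans (measure_mono hsub1) (measure_union_le _ _)
          rw [h0, zero_add] at this
          exact absurd (lt_of_le_of_lt this hdlt) (not_lt.mpr hδA.1)
        have key2 : μ (A ∩ C'ᶜ) ≠ 0 := by
          intro h0
          have hsub2 : A ∩ Cᶜ ⊆ (A ∩ C'ᶜ) ∪ symmDiff C' C := by
            intro x ⟨hxA, hxC⟩
            by_cases hx : x ∈ C'
            · exact Or.inr (Or.inl ⟨hx, hxC⟩)
            · exact Or.inl ⟨hxA, hx⟩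
          have : μ (A ∩ Cᶜ) ≤ μ (A ∩ C'ᶜ) + μ (symmDiff C' C) :=
            le_trans (measure_mono hsub2) (measure_union_le _ _)
          rw [h0, zero_add] at this
          exact absurd (lt_of_le_of_lt this hdlt) (not_lt.mpr hδA.2)
        exact pos_iff_ne_zero.mpr (mul_ne_zero key1 key2)
      calc μ (piBoundary μ π C) ≤ μ (piBoundary μ π C') := measure_mono hsubset
        _ ≤ ⨆ C ∈ 𝒞₀, μ (piBoundary μ π C) :=
            le_iSup₂ (f := fun C _ => μ (piBoundary μ π C)) C' hC'
  · exact iSup₂_le fun C hC =>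
      le_iSup₂ (f := fun C _ => μ (piBoundary μ π C)) C (hsub hC)
end

section
/- Let (𝒳, 𝒮, μ) be a probability space, let 𝒞 ⊆ 𝒮 be a countable family, and suppose that π = {A₁, …, A_m} is a finite measurable partition of 𝒳 with μ(∂(C : π)) < ε for every C ∈ 𝒞. Then 𝒞 can be covered by a collection of at most 2^{2(m+1)} ε-brackets whose endpoints are indicator functions of measurable sets C_l ⊆ C ⊆ C_u with μ(C_u \ C_l) < ε. -/
open MeasureTheory Set Filter

/-- If `π = {A₁, …, A_m}` is a finite measurable partition with `μ(∂(C : π)) < ε` for every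
`C` in the countable family `𝒞`, then `𝒞` is covered by at most `2^(2(m+1))` brackets
`[C_l, C_u]` of measurable sets with `C_l ⊆ C ⊆ C_u` and `μ(C_u \ C_l) < ε`. -/
theorem bracket_cover_of_small_boundaries {X : Type*} [MeasurableSpace X]
    (μ : Measure X) [IsProbabilityMeasure μ] (𝒞 : Set (Set X))
    (h𝒞 : ∀ C ∈ 𝒞, MeasurableSet C) (hcount : 𝒞.Countable)
    (ε : ENNReal) (m : ℕ) (π : Finset (Set X)) (hπcard : π.card = m)
    (hπ : IsFinitePartition (π : Set (Set X)))
    (hbd : ∀ C ∈ 𝒞, μ (piBoundary μ (π : Set (Set X)) C) < ε) :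
    ∃ n : ℕ, n ≤ 2 ^ (2 * (m + 1)) ∧ ∃ Cl Cu : Fin n → Set X,
      (∀ i, MeasurableSet (Cl i) ∧ MeasurableSet (Cu i) ∧ Cl i ⊆ Cu i ∧
        μ (Cu i \ Cl i) < ε) ∧
      ∀ C ∈ 𝒞, ∃ i, Cl i ⊆ C ∧ C ⊆ Cu i := by
  classical
  set S : Set X → Finset (Set X) × Finset (Set X) := fun C =>
    (π.filter (fun A => μ (A ∩ C) = 0), π.filter (fun A => μ (A ∩ Cᶜ) = 0)) with hS
  have hTfin : (S '' 𝒞).Finite := by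
    apply Set.Finite.subset (π.powerset ×ˢ π.powerset).finite_toSet
    rintro _ ⟨C, hC, rfl⟩
    simp only [Finset.coe_product, Set.mem_prod, Finset.mem_coe, Finset.mem_powerset, hS]
    exact ⟨Finset.filter_subset _ _, Finset.filter_subset _ _⟩
  set n : ℕ := hTfin.toFinset.card with hn
  set t : Fin n → Finset (Set X) × Finset (Set X) :=
    fun i => (hTfin.toFinset.equivFin.symm i : Finset (Set X) × Finset (Set X)) with ht
  set K : Fin n → Set (Set X) := fun i => {C ∈ 𝒞 | S C = t i} with hK
  have hKcount : ∀ i, (K i).Countable := fun i => hcount.mono (Set.sep_subset _ _)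
  have hKne : ∀ i, ∃ C₀, C₀ ∈ K i := by
    intro i
    have : t i ∈ hTfin.toFinset := (hTfin.toFinset.equivFin.symm i).2
    rw [Set.Finite.mem_toFinset] at this
    obtain ⟨C₀, hC₀, hSC₀⟩ := this
    exact ⟨C₀, hC₀, hSC₀⟩
  refine ⟨n, ?_, fun i => ⋂₀ K i, fun i => ⋃₀ K i, ?_, ?_⟩
  · -- cardinality bound
    have hsub : hTfin.toFinset ⊆ π.powerset ×ˢ π.powerset := by
      intro x hx
      rw [Set.Finite.mem_toFinset] at hx
      obtain ⟨C, hC, rfl⟩ := hx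
      simp only [Finset.mem_product, Finset.mem_powerset, hS]
      exact ⟨Finset.filter_subset _ _, Finset.filter_subset _ _⟩
    calc n ≤ (π.powerset ×ˢ π.powerset).card := Finset.card_le_card hsub
      _ = 2 ^ m * 2 ^ m := by
          rw [Finset.card_product, Finset.card_powerset, hπcard]
      _ = 2 ^ (m + m) := by rw [pow_add]
      _ ≤ 2 ^ (2 * (m + 1)) := by
          apply pow_le_pow_right₀ (by norm_num)
          omega
  · -- each bracket is good
    intro i
    obtain ⟨C₀, hC₀⟩ := hKne i
    have hC₀𝒞 : C₀ ∈ 𝒞 := hC₀.1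
    have hC₀t : S C₀ = t i := hC₀.2
    have hClm : MeasurableSet (⋂₀ K i) :=
      MeasurableSet.sInter (hKcount i) (fun C hC => h𝒞 C hC.1)
    have hCum : MeasurableSet (⋃₀ K i) :=
      MeasurableSet.sUnion (hKcount i) (fun C hC => h𝒞 C hC.1)
    have hClCu : ⋂₀ K i ⊆ ⋃₀ K i :=
      (Set.sInter_subset_of_mem hC₀).trans (Set.subset_sUnion_of_mem hC₀)
    refine ⟨hClm, hCum, hClCu, ?_⟩
    -- the measure estimate
    set N₁ : Set X := ⋃ C ∈ K i, ⋃ A ∈ (t i).1, A ∩ C with hN₁def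
    set N₂ : Set X := ⋃ C ∈ K i, ⋃ A ∈ (t i).2, A ∩ Cᶜ with hN₂def
    have hN₁ : μ N₁ = 0 := by
      rw [hN₁def, measure_biUnion_null_iff (hKcount i)]
      intro C hC
      refine (measure_biUnion_null_iff ((t i).1.countable_toSet)).mpr ?_
      intro A hA
      have : A ∈ π.filter (fun A => μ (A ∩ C) = 0) := by
        rw [show π.filter (fun A => μ (A ∩ C) = 0) = (t i).1 from congrArg Prod.fst hC.2]
        exact hA
      exact (Finset.mem_filter.mp this).2
    have hN₂ : μ N₂ = 0 := by
      rw [hN₂def, measure_biUnion_null_iff (hKcount i)]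
      intro C hC
      refine (measure_biUnion_null_iff ((t i).2.countable_toSet)).mpr ?_
      intro A hA
      have : A ∈ π.filter (fun A => μ (A ∩ Cᶜ) = 0) := by
        rw [show π.filter (fun A => μ (A ∩ Cᶜ) = 0) = (t i).2 from congrArg Prod.snd hC.2]
        exact hA
      exact (Finset.mem_filter.mp this).2
    have hsub : ⋃₀ K i \ ⋂₀ K i ⊆ N₁ ∪ N₂ ∪ piBoundary μ (π : Set (Set X)) C₀ := by
      intro x hx
      have hxuniv : x ∈ ⋃₀ (π : Set (Set X)) := by rw [hπ.2.2.2]; trivial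
      obtain ⟨A, hAπ, hxA⟩ := hxuniv
      by_cases h1 : μ (A ∩ C₀) = 0
      · -- A is essentially outside C₀
        have hA1 : A ∈ (t i).1 := by
          rw [← hC₀t]
          exact Finset.mem_filter.mpr ⟨hAπ, h1⟩
        obtain ⟨C, hC, hxC⟩ := hx.1
        left; left
        simp only [hN₁def, Set.mem_iUnion]
        exact ⟨C, hC, A, hA1, hxA, hxC⟩
      · by_cases h2 : μ (A ∩ C₀ᶜ) = 0
        · -- A is essentially inside C₀
          have hA2 : A ∈ (t i).2 := by
            rw [← hC₀t]
            exact Finset.mem_filter.mpr ⟨hAπ, h2⟩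
          have : ¬ x ∈ ⋂₀ K i := hx.2
          rw [Set.mem_sInter] at this
          push_neg at this
          obtain ⟨C, hC, hxC⟩ := this
          left; right
          simp only [hN₂def, Set.mem_iUnion]
          exact ⟨C, hC, A, hA2, hxA, hxC⟩
        · -- A is a boundary cell of C₀
          right
          exact ⟨A, ⟨hAπ, ENNReal.mul_pos h1 h2⟩, hxA⟩
    calc μ (⋃₀ K i \ ⋂₀ K i)
        ≤ μ (N₁ ∪ N₂ ∪ piBoundary μ (π : Set (Set X)) C₀) := measure_mono hsub
      _ ≤ μ (N₁ ∪ N₂) + μ (piBoundary μ (π : Set (Set X)) C₀) := measure_union_le _ _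
      _ ≤ μ N₁ + μ N₂ + μ (piBoundary μ (π : Set (Set X)) C₀) := by
          gcongr; exact measure_union_le _ _
      _ = μ (piBoundary μ (π : Set (Set X)) C₀) := by rw [hN₁, hN₂]; simp
      _ < ε := hbd C₀ hC₀𝒞
  · -- coverage
    intro C hC
    have hmem : S C ∈ hTfin.toFinset := by
      rw [Set.Finite.mem_toFinset]; exact ⟨C, hC, rfl⟩
    refine ⟨hTfin.toFinset.equivFin ⟨S C, hmem⟩, ?_, ?_⟩
    · apply Set.sInter_subset_of_mem
      refine ⟨hC, ?_⟩
      simp [ht]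
    · apply Set.subset_sUnion_of_mem
      refine ⟨hC, ?_⟩
      simp [ht]
end

section
/- Let 𝒳 = [0,1] with Lebesgue measure μ, let a₁, a₂, … be positive reals with s = Σ_{n=1}^∞ aₙ < 1, let s₀ = 0 and sₙ = Σ_{i=1}^n aᵢ, and let Cₙ = [s_{n−1}, sₙ). Let Jₙ = C₁ ∨ ⋯ ∨ Cₙ denote the join (the partition of [0,1] into the nonempty atoms of the field generated by C₁, …, Cₙ). Then for every n ≥ 1, μ(∂(C_{n+1} : Jₙ)) > 1 − s, while the family {C₁, C₂, …} has VC dimension 1. -/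
open MeasureTheory Set Filter

/-- The join `A₁ ∨ ⋯ ∨ A_n` of the sets `A i`: the partition consisting of all nonempty
basic intersections formed from the `A i` and their complements. -/
def joinOf {X : Type*} {n : ℕ} (A : Fin n → Set X) : Set (Set X) :=
  {B | B.Nonempty ∧ ∃ σ : Fin n → Bool, B = ⋂ i, (if σ i = true then A i else (A i)ᶜ)}

/-- **Counterexample (Remark).** With `𝒳 = [0,1]`, `μ` Lebesgue measure, positive reals
`aₙ` with `s = Σ aₙ < 1`, partial sums `sₙ`, and `C_{n+1} = [sₙ, s_{n+1})` (0-indexed: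
`C n = [sₙ, s_{n+1})`), the boundary of `C_{n+1}` relative to the join `Jₙ = C₁ ∨ ⋯ ∨ Cₙ`
has measure greater than `1 - s` for every `n ≥ 1`, even though the family
`{C₁, C₂, …}` has VC dimension exactly `1`. -/
theorem join_boundary_counterexample (a : ℕ → ℝ) (ha : ∀ n, 0 < a n)
    (hsum : Summable a) (hs : (∑' n, a n) < 1) :
    (∀ n : ℕ, 1 ≤ n →
      ENNReal.ofReal (1 - ∑' k, a k) <
        (volume.restrict (Set.Icc (0 : ℝ) 1))
          (piBoundary (volume.restrict (Set.Icc (0 : ℝ) 1))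
            (joinOf (fun i : Fin n => Set.Ico (∑ k ∈ Finset.range (i : ℕ), a k)
              (∑ k ∈ Finset.range ((i : ℕ) + 1), a k)))
            (Set.Ico (∑ k ∈ Finset.range n, a k) (∑ k ∈ Finset.range (n + 1), a k)))) ∧
    (∀ D : Finset ℝ,
        Shatters {C : Set ℝ | ∃ m : ℕ,
          C = Set.Ico (∑ k ∈ Finset.range m, a k) (∑ k ∈ Finset.range (m + 1), a k)} D →
        D.card ≤ 1) ∧
    (∃ D : Finset ℝ,
        Shatters {C : Set ℝ | ∃ m : ℕ,
          C = Set.Ico (∑ k ∈ Finset.range m, a k) (∑ k ∈ Finset.range (m + 1), a k)} D ∧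
        D.card = 1) := by
  set μr := volume.restrict (Set.Icc (0 : ℝ) 1) with hμr
  set s : ℕ → ℝ := fun m => ∑ k ∈ Finset.range m, a k with hsdef
  have hmono : ∀ {m m' : ℕ}, m ≤ m' → s m ≤ s m' := fun {m m'} h =>
    Finset.sum_le_sum_of_subset_of_nonneg (Finset.range_subset_range.2 h) (fun i _ _ => (ha i).le)
  have hsucc : ∀ m, s (m + 1) = s m + a m := fun m => Finset.sum_range_succ a m
  have hle_tsum : ∀ m, s m ≤ ∑' k, a k := fun m =>
    Summable.sum_le_tsum (Finset.range m) (fun i _ => (ha i).le) hsum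
  have hlt_tsum : ∀ m, s m < ∑' k, a k := fun m =>
    lt_of_lt_of_le (by rw [hsucc]; linarith [ha m]) (hle_tsum (m + 1))
  have h0 : ∀ m, 0 ≤ s m := fun m => Finset.sum_nonneg (fun i _ => (ha i).le)
  have hlt1 : ∀ m, s m < 1 := fun m => lt_trans (hlt_tsum m) hs
  -- disjointness of the intervals
  have hdisj : ∀ m m' : ℕ, m ≠ m' →
      Disjoint (Set.Ico (s m) (s (m + 1))) (Set.Ico (s m') (s (m' + 1))) := by
    have key : ∀ m m' : ℕ, m < m' →
        Disjoint (Set.Ico (s m) (s (m + 1))) (Set.Ico (s m') (s (m' + 1))) := by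
      intro m m' h
      apply Set.disjoint_left.2
      rintro x ⟨_, hx2⟩ ⟨hx3, _⟩
      exact absurd (lt_of_lt_of_le hx2 (hmono h)) (not_lt.2 hx3)
    intro m m' h
    rcases lt_or_gt_of_ne h with h' | h'
    · exact key m m' h'
    · exact (key m' m h').symm
  refine ⟨?_, ?_, ?_⟩
  · -- boundary measure part
    intro n hn
    set C : Set ℝ := Set.Ico (s n) (s (n + 1)) with hC
    set R : Set ℝ := ⋂ i : Fin n, (Set.Ico (s i) (s (i + 1)))ᶜ with hR
    have hRmem : ∀ x : ℝ, s n ≤ x → x ∈ R := by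
      intro x hx
      refine Set.mem_iInter.2 fun i => ?_
      intro hxi
      exact absurd (lt_of_lt_of_le hxi.2 (hmono i.2)) (not_lt.2 hx)
    -- R is in the join
    have hRjoin : R ∈ joinOf (fun i : Fin n => Set.Ico (s i) (s (i + 1))) := by
      refine ⟨⟨s n, hRmem _ le_rfl⟩, fun _ => false, ?_⟩
      simp [hR]
    -- measure computations
    have hms : ∀ b c : ℝ, 0 ≤ b → c ≤ 1 → μr (Set.Ico b c) = ENNReal.ofReal (c - b) := by
      intro b c hb hc
      rw [hμr, Measure.restrict_apply' measurableSet_Icc]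
      have : Set.Ico b c ∩ Set.Icc 0 1 = Set.Ico b c := by
        apply Set.inter_eq_self_of_subset_left
        intro x hx
        exact ⟨le_trans hb hx.1, le_of_lt (lt_of_lt_of_le hx.2 hc)⟩
      rw [this, Real.volume_Ico]
    have hmsIcc : ∀ b : ℝ, 0 ≤ b → μr (Set.Icc b 1) = ENNReal.ofReal (1 - b) := by
      intro b hb
      rw [hμr, Measure.restrict_apply' measurableSet_Icc]
      have : Set.Icc b 1 ∩ Set.Icc 0 1 = Set.Icc b 1 := by
        apply Set.inter_eq_self_of_subset_left
        intro x hx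
        exact ⟨le_trans hb hx.1, hx.2⟩
      rw [this, Real.volume_Icc]
    -- the positivity condition for R
    have hpos : 0 < μr (R ∩ C) * μr (R ∩ Cᶜ) := by
      have h1 : Set.Ico (s n) (s (n + 1)) ⊆ R ∩ C := by
        intro x hx
        exact ⟨hRmem x hx.1, hx⟩
      have h2 : Set.Icc (s (n + 1)) 1 ⊆ R ∩ Cᶜ := by
        intro x hx
        refine ⟨hRmem x (le_trans (hmono (Nat.le_succ n)) hx.1), fun hxC => ?_⟩
        exact absurd (lt_of_lt_of_le hxC.2 hx.1) (lt_irrefl x)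
      have m1 : ENNReal.ofReal (s (n + 1) - s n) ≤ μr (R ∩ C) := by
        rw [← hms (s n) (s (n + 1)) (h0 n) (hlt1 (n + 1)).le]
        exact measure_mono h1
      have m2 : ENNReal.ofReal (1 - s (n + 1)) ≤ μr (R ∩ Cᶜ) := by
        rw [← hmsIcc (s (n + 1)) (h0 (n + 1))]
        exact measure_mono h2
      have p1 : (0 : ENNReal) < ENNReal.ofReal (s (n + 1) - s n) := by
        rw [hsucc]; exact ENNReal.ofReal_pos.2 (by linarith [ha n])
      have p2 : (0 : ENNReal) < ENNReal.ofReal (1 - s (n + 1)) := by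
        exact ENNReal.ofReal_pos.2 (by linarith [hlt1 (n + 1)])
      exact ENNReal.mul_pos (lt_of_lt_of_le p1 m1).ne' (lt_of_lt_of_le p2 m2).ne'
    have hsub : R ⊆ piBoundary μr
        (joinOf (fun i : Fin n => Set.Ico (s i) (s (i + 1)))) C :=
      Set.subset_sUnion_of_mem ⟨hRjoin, hpos⟩
    have hsub2 : Set.Icc (s n) 1 ⊆ R := fun x hx => hRmem x hx.1
    calc ENNReal.ofReal (1 - ∑' k, a k)
        < ENNReal.ofReal (1 - s n) := by
          rw [ENNReal.ofReal_lt_ofReal_iff (by linarith [hlt1 n])]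
          linarith [hlt_tsum n]
      _ = μr (Set.Icc (s n) 1) := (hmsIcc (s n) (h0 n)).symm
      _ ≤ _ := measure_mono (hsub2.trans hsub)
  · -- VC dimension ≤ 1
    intro D hD
    by_contra hcard
    push_neg at hcard
    obtain ⟨x, hx, y, hy, hxy⟩ := Finset.one_lt_card.mp hcard
    obtain ⟨C1, ⟨m1, hm1⟩, hC1⟩ := hD {x, y} (Finset.insert_subset hx (Finset.singleton_subset_iff.2 hy))
    obtain ⟨C2, ⟨m2, hm2⟩, hC2⟩ := hD {x} (Finset.singleton_subset_iff.2 hx)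
    have hxC1 : x ∈ C1 := (hC1 x hx).2 (Finset.mem_insert_self x {y})
    have hyC1 : y ∈ C1 := (hC1 y hy).2 (by simp)
    have hxC2 : x ∈ C2 := (hC2 x hx).2 (Finset.mem_singleton_self x)
    have hyC2 : y ∉ C2 := fun h => hxy (Finset.mem_singleton.1 ((hC2 y hy).1 h)).symm
    have hm : m1 = m2 := by
      by_contra hne
      exact Set.disjoint_left.1 (hm1 ▸ hm2 ▸ hdisj m1 m2 hne) hxC1 hxC2
    apply hyC2
    rw [hm2, ← hm, ← hm1]
    exact hyC1
  · -- a shattered singleton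
    refine ⟨{0}, ?_, Finset.card_singleton 0⟩
    intro B hB
    by_cases h0B : (0 : ℝ) ∈ B
    · refine ⟨Set.Ico (s 0) (s 1), ⟨0, rfl⟩, ?_⟩
      intro x hx
      rw [Finset.mem_singleton] at hx
      subst hx
      simp only [h0B, iff_true]
      constructor
      · exact le_of_eq (by simp [hsdef])
      · have : s 0 < s 1 := by rw [hsucc]; simp [hsdef, ha 0]
        calc (0 : ℝ) = s 0 := by simp [hsdef]
          _ < s 1 := this
    · refine ⟨Set.Ico (s 1) (s 2), ⟨1, rfl⟩, ?_⟩
      intro x hx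
      rw [Finset.mem_singleton] at hx
      subst hx
      simp only [h0B, iff_false]
      intro hc
      have hs1 : 0 < s 1 := by rw [hsucc]; simp [hsdef, ha 0]
      linarith [hc.1]
end
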